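/- arXiv:2403.04610 — 6 statements merged into one kernel-verified Lean document; each statement's English description precedes it below -/
import Mathlib

section
/- Let B be a building set of the lattice of flats 𝓛(M) of a matroid M on a finite ground set, and fix F ∈ B. Suppose X, X′ ∈ B are both incomparable to F and satisfy X ∨ F = X′ ∨ F with X ∨ F ∉ B. Then X = X′. -/
open Set

variable {α : Type*}

/-- The lattice of flats of a matroid `M`, as the subtype of `Set α`
consisting of flats, ordered by inclusion. -/
abbrev FlatLat (M : Matroid α) : Type _ := {F : Set α // M.IsFlat F}

lemma Matroid.closure_flat' (M : Matroid α) (X : Set α) : M.IsFlat (M.closure X) := by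
  rw [Matroid.closure_def, Set.sInter_eq_iInter]
  have hne : Nonempty ({F : Set α | M.IsFlat F ∧ X ∩ M.E ⊆ F} : Set (Set α)) :=
    ⟨⟨M.E, M.ground_isFlat, Set.inter_subset_right⟩⟩
  exact Matroid.IsFlat.iInter fun F => F.2.1

/-- The bottom flat `⊥`, the closure of the empty set. -/
def botF (M : Matroid α) : FlatLat M := ⟨M.closure ∅, M.closure_flat' ∅⟩

/-- The top flat `⊤`, the ground set. -/
def topF (M : Matroid α) : FlatLat M := ⟨M.E, M.ground_isFlat⟩

/-- The join `X ∨ Y` of two flats: the closure of their union. -/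
def joinF (M : Matroid α) (X Y : FlatLat M) : FlatLat M :=
  ⟨M.closure (X.1 ∪ Y.1), M.closure_flat' _⟩

lemma botF_le (M : Matroid α) (F : FlatLat M) : botF M ≤ F := by
  show M.closure ∅ ⊆ F.1
  calc M.closure ∅ ⊆ M.closure F.1 := M.closure_subset_closure (Set.empty_subset _)
    _ = F.1 := F.2.closure

lemma le_topF (M : Matroid α) (F : FlatLat M) : F ≤ topF M := F.2.subset_ground

lemma le_joinF_left (M : Matroid α) (X Y : FlatLat M) : X ≤ joinF M X Y := by
  show X.1 ⊆ M.closure (X.1 ∪ Y.1)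
  exact (Set.subset_union_left).trans
    (M.subset_closure _ (Set.union_subset X.2.subset_ground Y.2.subset_ground))

lemma le_joinF_right (M : Matroid α) (X Y : FlatLat M) : Y ≤ joinF M X Y := by
  show Y.1 ⊆ M.closure (X.1 ∪ Y.1)
  exact (Set.subset_union_right).trans
    (M.subset_closure _ (Set.union_subset X.2.subset_ground Y.2.subset_ground))

lemma joinF_le (M : Matroid α) {X Y Z : FlatLat M} (hX : X ≤ Z) (hY : Y ≤ Z) :
    joinF M X Y ≤ Z := by
  show M.closure (X.1 ∪ Y.1) ⊆ Z.1
  calc M.closure (X.1 ∪ Y.1) ⊆ M.closure Z.1 := M.closure_subset_closure (Set.union_subset hX hY)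
    _ = Z.1 := Z.2.closure

/-- The set of maximal elements of `{Y ∈ B | Y ≤ X}` (the *factors* of `X`). -/
def maxBelow {L : Type*} [PartialOrder L] (B : Set L) (X : L) : Set L :=
  {Y | Y ∈ B ∧ Y ≤ X ∧ ∀ Z ∈ B, Z ≤ X → Y ≤ Z → Y = Z}

open Classical in
/-- The tuple in `∏_{Z ∈ max(B_{≤ X})} [lo, Z]` which is equal to `Y` in coordinate
`Y` and to `lo` in every other coordinate. -/
noncomputable def unitTuple {L : Type*} [PartialOrder L] (lo : L) (B : Set L) (X : L)
    (hlo : ∀ Z ∈ B, lo ≤ Z) (Y : maxBelow B X) :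
    (Z : maxBelow B X) → Set.Icc lo (Z : L) :=
  fun Z => if _ : Z = Y then ⟨(Z : L), ⟨hlo _ Z.2.1, le_rfl⟩⟩ else ⟨lo, ⟨le_rfl, hlo _ Z.2.1⟩⟩

/-- `B` is a building set of the interval `[lo, hi]` in the partial order `L`:
`B ⊆ [lo, hi] ∖ {lo}`, and for every `X ∈ [lo, hi] ∖ {lo}`, with
`max(B_{≤X}) = {X₁, …, X_ℓ}`, there is an order isomorphism
`∏_j [lo, X_j] → [lo, X]` sending, for each `j`, the tuple equal to `X_j` in
coordinate `j` and `lo` elsewhere, to `X_j`. -/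
def IsBuildingSetOn {L : Type*} [PartialOrder L] (lo hi : L) (B : Set L) : Prop :=
  ∃ hB : B ⊆ Set.Icc lo hi \ {lo},
    ∀ X, lo ≤ X → X ≤ hi → X ≠ lo →
      ∃ φ : ((Z : maxBelow B X) → Set.Icc lo (Z : L)) ≃o Set.Icc lo X,
        ∀ Y : maxBelow B X,
          φ (unitTuple lo B X (fun Z hZ => (hB hZ).1.1) Y)
            = ⟨(Y : L), ⟨(hB Y.2.1).1.1, Y.2.2.1⟩⟩

instance flatLat_finite (M : Matroid α) [M.Finite] : Finite (FlatLat M) := by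
  have h : {F : Set α | M.IsFlat F}.Finite :=
    M.ground_finite.finite_subsets.subset (fun F hF => hF.subset_ground)
  exact h.to_subtype

/-- For a building set `B` of the lattice of flats of a matroid on a
finite ground set and `F ∈ B`: if `X, X' ∈ B` are both incomparable to `F` and
`X ∨ F = X' ∨ F ∉ B`, then `X = X'`. -/
theorem uniqueness_of_join (M : Matroid α) [M.Finite] (B : Set (FlatLat M))
    (hB : IsBuildingSetOn (botF M) (topF M) B) (F : FlatLat M) (hF : F ∈ B)
    (X X' : FlatLat M) (hX : X ∈ B) (hX' : X' ∈ B)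
    (hXF : ¬ X ≤ F) (hFX : ¬ F ≤ X) (hXF' : ¬ X' ≤ F) (hFX' : ¬ F ≤ X')
    (heq : joinF M X F = joinF M X' F) (hnot : joinF M X F ∉ B) :
    X = X' := by
  classical
  obtain ⟨hBsub, hφ⟩ := hB
  set lo := botF M with hlo
  set J := joinF M X F with hJ
  have hne_lo : ∀ Y : FlatLat M, Y ∈ B → Y ≠ lo := fun Y hY h => (hBsub hY).2 h
  have hJbot : J ≠ lo := by
    intro h
    have := le_joinF_left M X F
    rw [show joinF M X F = lo from h] at this
    exact hne_lo X hX (le_antisymm this (botF_le M X))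
  obtain ⟨φ, hunit⟩ := hφ J (botF_le M J) (le_topF M J) hJbot
  -- existence of a factor above any element of B_{≤ J}
  have hfac : ∀ Y : FlatLat M, Y ∈ B → Y ≤ J → ∃ Z : maxBelow B J, Y ≤ (Z : FlatLat M) := by
    intro Y hYB hYJ
    obtain ⟨Z, hYZ, hZmax⟩ :=
      Finite.exists_le_maximal (p := fun W => W ∈ B ∧ W ≤ J) ⟨hYB, hYJ⟩
    exact ⟨⟨Z, hZmax.1.1, hZmax.1.2, fun W hWB hWJ hZW =>
      le_antisymm hZW (hZmax.2 ⟨hWB, hWJ⟩ hZW)⟩, hYZ⟩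
  obtain ⟨ZX, hXZX⟩ := hfac X hX (le_joinF_left M X F)
  obtain ⟨ZF, hFZF⟩ := hfac F hF (le_joinF_right M X F)
  have hZXZF : ZX ≠ ZF := by
    intro h
    apply hnot
    have hJZF : (ZF : FlatLat M) = J :=
      le_antisymm ZF.2.2.1 (joinF_le M (h ▸ hXZX) hFZF)
    exact hJZF ▸ ZF.2.1
  -- the top tuple
  set t := φ.symm ⟨J, botF_le M J, le_rfl⟩ with ht_def
  have ht : ∀ Z : maxBelow B J, ((t Z : FlatLat M)) = (Z : FlatLat M) := by
    intro Z
    refine le_antisymm (t Z).2.2 ?_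
    have h1 : unitTuple lo B J (fun W hW => (hBsub hW).1.1) Z ≤ t := by
      rw [ht_def, φ.le_symm_apply, hunit Z]
      exact Z.2.2.1
    have h2 := h1 Z
    simpa [unitTuple] using Subtype.coe_le_coe.mpr h2
  -- zero coordinates
  have hzero : ∀ (Y : FlatLat M) (hYJ : Y ≤ J) (ZY : maxBelow B J), Y ≤ (ZY : FlatLat M) →
      ∀ Z : maxBelow B J, Z ≠ ZY →
        ((φ.symm ⟨Y, botF_le M Y, hYJ⟩ Z : FlatLat M)) = lo := by
    intro Y hYJ ZY hYZY Z hZZY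
    have h1 : φ.symm ⟨Y, botF_le M Y, hYJ⟩ ≤ unitTuple lo B J (fun W hW => (hBsub hW).1.1) ZY := by
      rw [φ.symm_apply_le, hunit ZY]
      exact hYZY
    have h2 := h1 Z
    refine le_antisymm ?_ (φ.symm ⟨Y, botF_le M Y, hYJ⟩ Z).2.1
    simpa [unitTuple, dif_neg hZZY] using Subtype.coe_le_coe.mpr h2
  set v := φ.symm ⟨F, botF_le M F, le_joinF_right M X F⟩ with hv_def
  -- least upper bound property
  have hlub : ∀ (Y : FlatLat M) (hYJ : Y ≤ J), joinF M Y F = J →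
      ∀ s, φ.symm ⟨Y, botF_le M Y, hYJ⟩ ≤ s → v ≤ s → t ≤ s := by
    intro Y hYJ hYjoin s h1 h2
    rw [φ.symm_apply_le] at h1 h2 ⊢
    have hY : Y ≤ (φ s : FlatLat M) := h1
    have hF' : F ≤ (φ s : FlatLat M) := h2
    have hle : joinF M Y F ≤ (φ s : FlatLat M) := joinF_le M hY hF'
    rw [hYjoin] at hle
    exact hle
  set u := φ.symm ⟨X, botF_le M X, le_joinF_left M X F⟩ with hu_def
  -- only two factors
  have htwo : ∀ Z : maxBelow B J, Z = ZX ∨ Z = ZF := by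
    intro Z
    by_contra hcon
    push_neg at hcon
    obtain ⟨h1, h2⟩ := hcon
    set s : (W : maxBelow B J) → Set.Icc lo (W : FlatLat M) :=
      fun W => if W = Z then ⟨lo, le_rfl, botF_le M _⟩ else t W with hs_def
    have hgen : ∀ (Y : FlatLat M) (hYJ : Y ≤ J) (ZY : maxBelow B J), Y ≤ (ZY : FlatLat M) →
        ZY ≠ Z → φ.symm ⟨Y, botF_le M Y, hYJ⟩ ≤ s := by
      intro Y hYJ ZY hYZY hZYZ W
      by_cases hW : W = Z
      · have h0 := hzero Y hYJ ZY hYZY W (by rw [hW]; exact fun h => hZYZ h.symm)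
        have hsW : s W = ⟨lo, le_rfl, botF_le M _⟩ := by simp [hs_def, hW]
        rw [hsW]
        exact Subtype.coe_le_coe.mp (le_of_eq h0)
      · have hsW : s W = t W := by simp [hs_def, hW]
        rw [hsW]
        exact Subtype.coe_le_coe.mp
          (le_trans (φ.symm ⟨Y, botF_le M Y, hYJ⟩ W).2.2 (le_of_eq (ht W).symm))
    have hus : u ≤ s := hgen X (le_joinF_left M X F) ZX hXZX (Ne.symm h1)
    have hvs : v ≤ s := hgen F (le_joinF_right M X F) ZF hFZF (Ne.symm h2)
    have hts := hlub X (le_joinF_left M X F) rfl s hus hvs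
    have h3 := Subtype.coe_le_coe.mpr (hts Z)
    have hsZ : s Z = ⟨lo, le_rfl, botF_le M _⟩ := by simp [hs_def]
    rw [hsZ, ht Z] at h3
    exact hne_lo (Z : FlatLat M) Z.2.1 (le_antisymm h3 (botF_le M _))
  -- the key step
  have key : ∀ Y : FlatLat M, Y ∈ B → joinF M Y F = J → Y = (ZX : FlatLat M) := by
    intro Y hYB hYjoin
    have hYJ : Y ≤ J := by
      have := le_joinF_left M Y F; rwa [hYjoin] at this
    obtain ⟨ZY, hYZY⟩ := hfac Y hYB hYJ
    have hZYF : ZY ≠ ZF := by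
      intro h
      apply hnot
      have hle : joinF M Y F ≤ (ZF : FlatLat M) := joinF_le M (h ▸ hYZY) hFZF
      rw [hYjoin] at hle
      have hJZF : (ZF : FlatLat M) = J := le_antisymm ZF.2.2.1 hle
      exact hJZF ▸ ZF.2.1
    have hZYX : ZY = ZX := (htwo ZY).resolve_right hZYF
    set uY := φ.symm ⟨Y, botF_le M Y, hYJ⟩ with huY_def
    -- the ZY coordinate of uY is full
    have hfull : ((uY ZY : FlatLat M)) = (ZY : FlatLat M) := by
      set s : (W : maxBelow B J) → Set.Icc lo (W : FlatLat M) :=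
        fun W => if W = ZY then uY W else t W with hs_def
      have hus : uY ≤ s := by
        intro W
        by_cases hW : W = ZY
        · have hsW : s W = uY W := by simp [hs_def, hW]
          rw [hsW]
        · have hsW : s W = t W := by simp [hs_def, hW]
          rw [hsW]
          exact Subtype.coe_le_coe.mp (le_trans (uY W).2.2 (le_of_eq (ht W).symm))
      have hvs : v ≤ s := by
        intro W
        by_cases hW : W = ZY
        · have h0 := hzero F (le_joinF_right M X F) ZF hFZF W (by rw [hW]; exact hZYF)
          have hsW : s W = uY W := by simp [hs_def, hW]
          rw [hsW]
          exact Subtype.coe_le_coe.mp (le_trans (le_of_eq h0) (uY W).2.1)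
        · have hsW : s W = t W := by simp [hs_def, hW]
          rw [hsW]
          exact Subtype.coe_le_coe.mp (le_trans (v W).2.2 (le_of_eq (ht W).symm))
      have hts := hlub Y hYJ hYjoin s hus hvs
      have h3 := Subtype.coe_le_coe.mpr (hts ZY)
      have hsZY : s ZY = uY ZY := by simp [hs_def]
      rw [hsZY, ht ZY] at h3
      exact le_antisymm (uY ZY).2.2 h3
    -- hence uY is the unit tuple at ZY
    have huY : uY = unitTuple lo B J (fun W hW => (hBsub hW).1.1) ZY := by
      funext Z
      apply Subtype.ext
      by_cases hZ : Z = ZY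
      · subst hZ
        simpa [unitTuple] using hfull
      · have h0 := hzero Y hYJ ZY hYZY Z hZ
        simpa [unitTuple, dif_neg hZ] using h0
    have hφuY : φ uY = ⟨(ZY : FlatLat M), (hBsub ZY.2.1).1.1, ZY.2.2.1⟩ := by
      rw [huY]; exact hunit ZY
    rw [huY_def, φ.apply_symm_apply] at hφuY
    have := congrArg Subtype.val hφuY
    simpa [hZYX] using this
  have h1 : X = (ZX : FlatLat M) := key X hX rfl
  have h2 : X' = (ZX : FlatLat M) := key X' hX' heq.symm
  rw [h1, h2]
end

section
/- Let B be a building set of the lattice of flats 𝓛(M) of a matroid M on a finite ground set, and let F ∈ B. Then the restriction B^F = {X ∈ B : X ≤ F} is a building set of the interval [⊥, F]; that is, B^F ⊆ [⊥,F] ∖ {⊥}, and for every X ∈ [⊥,F] ∖ {⊥} with max((B^F)_{≤X}) = {X₁,…,X_ℓ}, there is an order isomorphism ∏_{j=1}^{ℓ} [⊥, X_j] → [⊥, X] sending, for each j, the tuple equal to X_j in coordinate j and ⊥ elsewhere, to X_j. -/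
open Set

variable {α : Type*}

open Classical in
/-- Auxiliary: the unit tuple, phrased for an arbitrary set `S` of coordinates. -/
noncomputable def ut {L : Type*} [PartialOrder L] (lo : L) (S : Set L)
    (hlo : ∀ Z ∈ S, lo ≤ Z) (Y : S) : (Z : S) → Set.Icc lo (Z : L) :=
  fun Z => if _ : Z = Y then ⟨(Z : L), ⟨hlo _ Z.2, le_rfl⟩⟩ else ⟨lo, ⟨le_rfl, hlo _ Z.2⟩⟩

lemma unitTuple_eq_ut {L : Type*} [PartialOrder L] (lo : L) (B : Set L) (X : L)
    (hlo : ∀ Z ∈ B, lo ≤ Z) (Y : maxBelow B X) :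
    unitTuple lo B X hlo Y = ut lo (maxBelow B X) (fun Z hZ => hlo Z hZ.1) Y := by
  funext Z
  by_cases h : Z = Y <;> simp [unitTuple, ut, h]

lemma key_transfer {L : Type*} [PartialOrder L] {lo X : L} (S T : Set L) (hST : S = T)
    (hloS : ∀ Z ∈ S, lo ≤ Z) (hloT : ∀ Z ∈ T, lo ≤ Z)
    (h : ∃ φ : ((Z : S) → Set.Icc lo (Z : L)) ≃o Set.Icc lo X,
      ∀ Y : S, ((φ (ut lo S hloS Y) : L) = Y)) :
    ∃ φ : ((Z : T) → Set.Icc lo (Z : L)) ≃o Set.Icc lo X,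
      ∀ Y : T, ((φ (ut lo T hloT Y) : L) = Y) := by
  subst hST; exact h

/-- For a building set `B` of the lattice of flats of a matroid on a
finite ground set and `F ∈ B`, the restriction `B^F = {X ∈ B : X ≤ F}` is a building
set of the interval `[⊥, F]`. -/
theorem restriction_buildingSet (M : Matroid α) [M.Finite] (B : Set (FlatLat M))
    (hB : IsBuildingSetOn (botF M) (topF M) B) (F : FlatLat M) (hF : F ∈ B) :
    IsBuildingSetOn (botF M) F {X : FlatLat M | X ∈ B ∧ X ≤ F} := by
  obtain ⟨hBsub, hiso⟩ := hB
  set B' : Set (FlatLat M) := {X : FlatLat M | X ∈ B ∧ X ≤ F} with hB'def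
  have hsub : B' ⊆ Set.Icc (botF M) F \ {botF M} := by
    rintro Y ⟨hY1, hY2⟩
    exact ⟨⟨(hBsub hY1).1.1, hY2⟩, (hBsub hY1).2⟩
  refine ⟨hsub, fun X hloX hXF hXne => ?_⟩
  have hset : maxBelow B X = maxBelow B' X := by
    ext Y
    constructor
    · rintro ⟨hY1, hY2, hY3⟩
      exact ⟨⟨hY1, hY2.trans hXF⟩, hY2, fun Z hZ hZX hYZ => hY3 Z hZ.1 hZX hYZ⟩
    · rintro ⟨⟨hY1, _⟩, hY2, hY3⟩
      exact ⟨hY1, hY2, fun Z hZ hZX hYZ => hY3 Z ⟨hZ, hZX.trans hXF⟩ hZX hYZ⟩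
  obtain ⟨φ, hφ⟩ := hiso X hloX (hXF.trans (le_topF M F)) hXne
  have h1 : ∃ φ : ((Z : maxBelow B X) → Set.Icc (botF M) (Z : FlatLat M)) ≃o
      Set.Icc (botF M) X, ∀ Y : maxBelow B X,
        ((φ (ut (botF M) (maxBelow B X)
          (fun Z hZ => (hBsub hZ.1).1.1) Y) : FlatLat M) = Y) := by
    refine ⟨φ, fun Y => ?_⟩
    rw [← unitTuple_eq_ut (botF M) B X (fun Z hZ => (hBsub hZ).1.1) Y, hφ Y]
  have h2 := key_transfer (maxBelow B X) (maxBelow B' X) hset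
    (fun Z hZ => (hBsub hZ.1).1.1) (fun Z hZ => (hsub hZ.1).1.1) h1
  obtain ⟨ψ, hψ⟩ := h2
  refine ⟨ψ, fun Y => ?_⟩
  apply Subtype.ext
  rw [unitTuple_eq_ut (botF M) B' X (fun Z hZ => (hsub hZ).1.1) Y]
  exact hψ Y
end

section
/- Let B be a building set of the lattice of flats 𝓛(M) of a matroid M on a finite ground set, and let F ∈ B. Then the contraction B_F = {X ∨ F : X ∈ B, X ≰ F} is a building set of the interval [F, ⊤]; that is, B_F ⊆ [F,⊤] ∖ {F}, and for every X ∈ [F,⊤] ∖ {F} with max((B_F)_{≤X}) = {Z₁,…,Z_ℓ}, there is an order isomorphism ∏_{j=1}^{ℓ} [F, Z_j] → [F, X] sending, for each j, the tuple equal to Z_j in coordinate j and F elsewhere, to Z_j. -/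
open Set

variable {α : Type*}

section Contraction

lemma exists_maxBelow_ge {L : Type*} [PartialOrder L] [Finite L] {B : Set L} {X Y : L}
    (hY : Y ∈ B) (hYX : Y ≤ X) : ∃ m ∈ maxBelow B X, Y ≤ m := by
  have hfin : ({Z | Z ∈ B ∧ Z ≤ X ∧ Y ≤ Z} : Set L).Finite := Set.toFinite _
  obtain ⟨m, hm, hmax'⟩ := hfin.exists_maximal ⟨Y, hY, hYX, le_rfl⟩
  have hmax : ∀ Z ∈ ({Z | Z ∈ B ∧ Z ≤ X ∧ Y ≤ Z} : Set L), m ≤ Z → m = Z :=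
    fun Z hZ h => le_antisymm h (hmax' hZ h)
  exact ⟨m, ⟨hm.1, hm.2.1, fun Z hZ hZX hmZ =>
    hmax Z ⟨hZ, hZX, le_trans hm.2.2 hmZ⟩ hmZ⟩, hm.2.2⟩

structure BSCtx (L : Type*) [PartialOrder L] (bot F X : L) (join : L → L → L)
    (B Bf : Set L) where
  φ : ((Z : maxBelow B X) → Set.Icc bot (Z : L)) ≃o Set.Icc bot X
  hbot : ∀ z : L, bot ≤ z
  hFX : F ≤ X
  hlo : ∀ Z ∈ B, bot ≤ Z
  hphiu : ∀ Y : maxBelow B X,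
    φ (unitTuple bot B X hlo Y) = ⟨(Y : L), hlo _ Y.2.1, Y.2.2.1⟩
  hjl : ∀ x y : L, x ≤ join x y
  hjr : ∀ x y : L, y ≤ join x y
  hjle : ∀ ⦃x y z : L⦄, x ≤ z → y ≤ z → join x y ≤ z
  hBbot : ∀ Z ∈ B, Z ≠ bot
  j0 : maxBelow B X
  hj0 : F ≤ (j0 : L)

namespace BSCtx

variable {L : Type*} [PartialOrder L] {bot F X : L} {join : L → L → L} {B Bf : Set L}

/-- `φ.symm F`. -/
noncomputable def fh (C : BSCtx L bot F X join B Bf) :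
    (Z : maxBelow B X) → Set.Icc bot (Z : L) :=
  C.φ.symm ⟨F, C.hbot F, C.hFX⟩

/-- top element of `Icc bot j`. -/
def topc (C : BSCtx L bot F X join B Bf) (j : maxBelow B X) : Set.Icc bot (j : L) :=
  ⟨(j : L), C.hbot _, le_rfl⟩

open Classical in
/-- tuple with `c` at coordinate `j` and `fh` elsewhere. -/
noncomputable def vt (C : BSCtx L bot F X join B Bf) (j : maxBelow B X)
    (c : Set.Icc bot (j : L)) :
    (Z : maxBelow B X) → Set.Icc bot (Z : L) :=
  fun i => if h : i = j then ⟨c.1, c.2.1, by rw [h]; exact c.2.2⟩ else C.fh i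

lemma vt_self (C : BSCtx L bot F X join B Bf) (j : maxBelow B X) (c : Set.Icc bot (j : L)) :
    (C.vt j c j).1 = c.1 := by
  simp [vt]

lemma vt_ne (C : BSCtx L bot F X join B Bf) {j i : maxBelow B X} (c : Set.Icc bot (j : L))
    (h : i ≠ j) : C.vt j c i = C.fh i := by
  simp [vt, h]

lemma symm_unit (C : BSCtx L bot F X join B Bf) (j : maxBelow B X) :
    C.φ.symm ⟨(j : L), C.hlo _ j.2.1, j.2.2.1⟩ = unitTuple bot B X C.hlo j := by
  rw [← C.hphiu j, C.φ.symm_apply_apply]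

lemma unitTuple_self (C : BSCtx L bot F X join B Bf) (j : maxBelow B X) :
    (unitTuple bot B X C.hlo j j).1 = (j : L) := by
  simp [unitTuple]

lemma unitTuple_ne (C : BSCtx L bot F X join B Bf) {j i : maxBelow B X} (h : i ≠ j) :
    (unitTuple bot B X C.hlo j i).1 = bot := by
  simp [unitTuple, h]

lemma phi_fh (C : BSCtx L bot F X join B Bf) : C.φ C.fh = ⟨F, C.hbot F, C.hFX⟩ :=
  C.φ.apply_symm_apply _

lemma joinX (C : BSCtx L bot F X join B Bf) (j : maxBelow B X) : join (j : L) F ≤ X :=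
  C.hjle j.2.2.1 C.hFX

/-- Lemma (B): `φ (vt j ⊤) = join j F`. -/
lemma phi_vt_top (C : BSCtx L bot F X join B Bf) (j : maxBelow B X) :
    C.φ (C.vt j (C.topc j)) = ⟨join (j : L) F, C.hbot _, C.joinX j⟩ := by
  apply le_antisymm
  · have hle : C.vt j (C.topc j) ≤ C.φ.symm ⟨join (j : L) F, C.hbot _, C.joinX j⟩ := by
      have h1 : unitTuple bot B X C.hlo j ≤ C.φ.symm ⟨join (j : L) F, C.hbot _, C.joinX j⟩ := by
        rw [← C.symm_unit j]
        exact C.φ.symm.monotone (Subtype.mk_le_mk.mpr (C.hjl _ _))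
      have h2 : C.fh ≤ C.φ.symm ⟨join (j : L) F, C.hbot _, C.joinX j⟩ :=
        C.φ.symm.monotone (Subtype.mk_le_mk.mpr (C.hjr _ _))
      intro i
      by_cases h : i = j
      · subst h
        have h3 := h1 i
        rw [← Subtype.coe_le_coe] at h3 ⊢
        rw [C.vt_self]
        rw [C.unitTuple_self] at h3
        exact h3
      · rw [C.vt_ne _ h]
        exact h2 i
    calc C.φ (C.vt j (C.topc j)) ≤ C.φ (C.φ.symm ⟨join (j : L) F, C.hbot _, C.joinX j⟩) :=
          C.φ.monotone hle
      _ = _ := C.φ.apply_symm_apply _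
  · apply Subtype.mk_le_mk.mpr
    apply C.hjle
    · have h1 : unitTuple bot B X C.hlo j ≤ C.vt j (C.topc j) := by
        intro i
        by_cases h : i = j
        · subst h
          rw [← Subtype.coe_le_coe, C.vt_self, C.unitTuple_self]
          exact le_rfl
        · rw [C.vt_ne _ h, ← Subtype.coe_le_coe, C.unitTuple_ne h]
          exact (C.fh i).2.1
      have h4 := C.φ.monotone h1
      rw [C.hphiu j] at h4
      exact h4
    · have h2 : C.fh ≤ C.vt j (C.topc j) := by
        intro i
        by_cases h : i = j
        · subst h
          rw [← Subtype.coe_le_coe, C.vt_self]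
          exact (C.fh i).2.2
        · rw [C.vt_ne _ h]
      have h5 := C.φ.monotone h2
      rw [C.phi_fh] at h5
      exact h5

lemma symm_join (C : BSCtx L bot F X join B Bf) (j : maxBelow B X) :
    C.φ.symm ⟨join (j : L) F, C.hbot _, C.joinX j⟩ = C.vt j (C.topc j) := by
  rw [← C.phi_vt_top j, C.φ.symm_apply_apply]

/-- K4: `fh` vanishes off `j0`. -/
lemma fh_ne_j0 (C : BSCtx L bot F X join B Bf) {i : maxBelow B X} (h : i ≠ C.j0) :
    (C.fh i).1 = bot := by
  have h1 : C.fh ≤ unitTuple bot B X C.hlo C.j0 := by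
    rw [← C.symm_unit]
    exact C.φ.symm.monotone (Subtype.mk_le_mk.mpr C.hj0)
  have h2 := h1 i
  rw [← Subtype.coe_le_coe, C.unitTuple_ne h] at h2
  exact le_antisymm h2 (C.hbot _)

/-- K8. -/
lemma symm_coord_of_le (C : BSCtx L bot F X join B Bf) {i : maxBelow B X}
    (hi : (i : L) ≤ F) (y : Set.Icc bot X) (hy : F ≤ y.1) :
    C.φ.symm y i = C.fh i := by
  have hij : i = C.j0 := by
    by_contra hne
    have h1 : unitTuple bot B X C.hlo i ≤ unitTuple bot B X C.hlo C.j0 := by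
      rw [← C.symm_unit, ← C.symm_unit]
      exact C.φ.symm.monotone (Subtype.mk_le_mk.mpr (le_trans hi C.hj0))
    have h2 := h1 i
    rw [← Subtype.coe_le_coe, C.unitTuple_self, C.unitTuple_ne hne] at h2
    exact C.hBbot _ i.2.1 (le_antisymm h2 (C.hbot _))
  subst hij
  have hFj : F = (C.j0 : L) := le_antisymm C.hj0 hi
  have hfh : (C.fh C.j0).1 = (C.j0 : L) := by
    have h3 : C.fh = unitTuple bot B X C.hlo C.j0 := by
      rw [← C.symm_unit]
      unfold fh
      congr 1
      exact Subtype.ext hFj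
    rw [h3, C.unitTuple_self]
  apply Subtype.ext
  refine le_antisymm ?_ ?_
  · rw [hfh]
    exact (C.φ.symm y C.j0).2.2
  · exact C.φ.symm.monotone (show (⟨F, C.hbot F, C.hFX⟩ : Set.Icc bot X) ≤ y from hy) C.j0

/-- K7. -/
lemma not_le_join (C : BSCtx L bot F X join B Bf) {i j : maxBelow B X} (hne : j ≠ i)
    (hjF : ¬((j : L) ≤ F)) (hle : (j : L) ≤ join (i : L) F) : False := by
  have h1 : unitTuple bot B X C.hlo j ≤ C.vt i (C.topc i) := by
    rw [← C.symm_unit, ← C.symm_join]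
    exact C.φ.symm.monotone (Subtype.mk_le_mk.mpr hle)
  have h2 := h1 j
  rw [← Subtype.coe_le_coe, C.unitTuple_self, C.vt_ne _ hne] at h2
  by_cases hj : j = C.j0
  · subst hj
    have hfh : (C.fh C.j0).1 = (C.j0 : L) := le_antisymm (C.fh C.j0).2.2 h2
    have h3 : C.fh = unitTuple bot B X C.hlo C.j0 := by
      funext k
      apply Subtype.ext
      by_cases hk : k = C.j0
      · subst hk; rw [hfh, C.unitTuple_self]
      · rw [C.fh_ne_j0 hk, C.unitTuple_ne hk]
    have hF : F = (C.j0 : L) := by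
      have h4 := C.phi_fh
      rw [h3, C.hphiu C.j0] at h4
      exact (congrArg Subtype.val h4).symm
    exact hjF (hF ▸ le_rfl)
  · rw [C.fh_ne_j0 hj] at h2
    exact C.hBbot _ j.2.1 (le_antisymm h2 (C.hbot _))

lemma join_inj (C : BSCtx L bot F X join B Bf) {i j : maxBelow B X}
    (hi : ¬((i : L) ≤ F)) (hj : ¬((j : L) ≤ F))
    (hjoin : join (i : L) F = join (j : L) F) : i = j := by
  by_contra hne
  exact C.not_le_join (Ne.symm hne) hj (by rw [hjoin]; exact C.hjl (j : L) F)

/-- (A): coordinates off `j` of `φ.symm y` equal `fh` when `F ≤ y ≤ join j F`. -/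
lemma coord_eq_fh (C : BSCtx L bot F X join B Bf) {j : maxBelow B X} (y : Set.Icc bot X)
    (hFy : F ≤ y.1) (hyj : y.1 ≤ join (j : L) F) {i : maxBelow B X} (hij : i ≠ j) :
    C.φ.symm y i = C.fh i := by
  apply Subtype.ext
  refine le_antisymm ?_ ?_
  · have h1 : C.φ.symm y ≤ C.vt j (C.topc j) := by
      rw [← C.symm_join]
      exact C.φ.symm.monotone (Subtype.coe_le_coe.mp hyj)
    have h2 := h1 i
    rw [C.vt_ne _ hij] at h2
    exact h2
  · exact C.φ.symm.monotone (show (⟨F, C.hbot F, C.hFX⟩ : Set.Icc bot X) ≤ y from hFy) i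

lemma vt_symm_eq (C : BSCtx L bot F X join B Bf) {j : maxBelow B X} (y : Set.Icc bot X)
    (hFy : F ≤ y.1) (hyj : y.1 ≤ join (j : L) F) :
    C.vt j (C.φ.symm y j) = C.φ.symm y := by
  funext i
  by_cases h : i = j
  · subst h
    apply Subtype.ext
    rw [C.vt_self]
  · rw [C.vt_ne _ h, C.coord_eq_fh y hFy hyj h]


lemma fh_le_vt (C : BSCtx L bot F X join B Bf) (j : maxBelow B X)
    (c : Set.Icc bot (j : L)) (hc : C.fh j ≤ c) : C.fh ≤ C.vt j c := by
  intro i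
  by_cases h : i = j
  · subst h
    rw [← Subtype.coe_le_coe, C.vt_self]
    exact hc
  · rw [C.vt_ne _ h]

lemma vt_le_vt (C : BSCtx L bot F X join B Bf) (j : maxBelow B X)
    {c c' : Set.Icc bot (j : L)} (h : c ≤ c') : C.vt j c ≤ C.vt j c' := by
  intro i
  by_cases hi : i = j
  · subst hi
    rw [← Subtype.coe_le_coe, C.vt_self, C.vt_self]
    exact h
  · rw [C.vt_ne _ hi, C.vt_ne _ hi]


end BSCtx


structure BSCtx2 (L : Type*) [PartialOrder L] (bot F X : L) (join : L → L → L)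
    (B Bf : Set L) extends BSCtx L bot F X join B Bf where
  hmem : ∀ i : maxBelow B X, ¬((i : L) ≤ F) → join (i : L) F ∈ maxBelow Bf X
  sidx : maxBelow Bf X → maxBelow B X
  hsidx1 : ∀ Z, ¬((sidx Z : L) ≤ F)
  hsidx2 : ∀ Z, join (sidx Z : L) F = (Z : L)

namespace BSCtx2

variable {L : Type*} [PartialOrder L] {bot F X : L} {join : L → L → L} {B Bf : Set L}

open Classical in
noncomputable def gmap (C : BSCtx2 L bot F X join B Bf)
    (t : (Z : maxBelow Bf X) → Set.Icc F (Z : L)) :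
    (i : maxBelow B X) → Set.Icc bot (i : L) :=
  fun i => if h : ¬((i : L) ≤ F) then
      C.toBSCtx.φ.symm ⟨(t ⟨join (i : L) F, C.hmem i h⟩).1, C.toBSCtx.hbot _,
        le_trans (t ⟨join (i : L) F, C.hmem i h⟩).2.2 (C.hmem i h).2.1⟩ i
    else C.toBSCtx.fh i

lemma gmap_pos (C : BSCtx2 L bot F X join B Bf)
    (t : (Z : maxBelow Bf X) → Set.Icc F (Z : L)) {i : maxBelow B X}
    (h : ¬((i : L) ≤ F)) :
    C.gmap t i = C.toBSCtx.φ.symm ⟨(t ⟨join (i : L) F, C.hmem i h⟩).1, C.toBSCtx.hbot _,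
        le_trans (t ⟨join (i : L) F, C.hmem i h⟩).2.2 (C.hmem i h).2.1⟩ i := by
  simp only [gmap]
  rw [dif_pos h]

lemma gmap_neg (C : BSCtx2 L bot F X join B Bf)
    (t : (Z : maxBelow Bf X) → Set.Icc F (Z : L)) {i : maxBelow B X}
    (h : (i : L) ≤ F) : C.gmap t i = C.toBSCtx.fh i := by
  simp only [gmap]
  rw [dif_neg (not_not_intro h)]

lemma fh_le_gmap (C : BSCtx2 L bot F X join B Bf)
    (t : (Z : maxBelow Bf X) → Set.Icc F (Z : L)) : C.toBSCtx.fh ≤ C.gmap t := by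
  intro i
  by_cases h : (i : L) ≤ F
  · rw [C.gmap_neg t h]
  · rw [C.gmap_pos t h]
    exact C.toBSCtx.φ.symm.monotone (Subtype.mk_le_mk.mpr (t _).2.1) i

lemma gmap_mono (C : BSCtx2 L bot F X join B Bf)
    {t t' : (Z : maxBelow Bf X) → Set.Icc F (Z : L)} (h : t ≤ t') :
    C.gmap t ≤ C.gmap t' := by
  intro i
  by_cases hi : (i : L) ≤ F
  · rw [C.gmap_neg t hi, C.gmap_neg t' hi]
  · rw [C.gmap_pos t hi, C.gmap_pos t' hi]
    exact C.toBSCtx.φ.symm.monotone (Subtype.mk_le_mk.mpr (h _)) i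

noncomputable def toFun (C : BSCtx2 L bot F X join B Bf)
    (t : (Z : maxBelow Bf X) → Set.Icc F (Z : L)) : Set.Icc F X :=
  ⟨(C.toBSCtx.φ (C.gmap t)).1, by
      have h1 := C.toBSCtx.φ.monotone (C.fh_le_gmap t)
      rw [C.toBSCtx.phi_fh] at h1
      exact h1,
    (C.toBSCtx.φ (C.gmap t)).2.2⟩

def yb (C : BSCtx2 L bot F X join B Bf) (y : Set.Icc F X) : Set.Icc bot X :=
  ⟨y.1, C.toBSCtx.hbot _, y.2.2⟩

noncomputable def invFun (C : BSCtx2 L bot F X join B Bf) (y : Set.Icc F X) :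
    (Z : maxBelow Bf X) → Set.Icc F (Z : L) :=
  fun Z =>
    ⟨(C.toBSCtx.φ (C.toBSCtx.vt (C.sidx Z) (C.toBSCtx.φ.symm (C.yb y) (C.sidx Z)))).1, by
        have h0 : C.toBSCtx.fh (C.sidx Z) ≤ C.toBSCtx.φ.symm (C.yb y) (C.sidx Z) :=
          C.toBSCtx.φ.symm.monotone
            (show (⟨F, C.toBSCtx.hbot F, C.toBSCtx.hFX⟩ : Set.Icc bot X) ≤ C.yb y from y.2.1) _
        have h1 := C.toBSCtx.φ.monotone (C.toBSCtx.fh_le_vt _ _ h0)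
        rw [C.toBSCtx.phi_fh] at h1
        exact h1, by
        have hc : C.toBSCtx.φ.symm (C.yb y) (C.sidx Z) ≤ C.toBSCtx.topc (C.sidx Z) :=
          (C.toBSCtx.φ.symm (C.yb y) (C.sidx Z)).2.2
        have h1 := C.toBSCtx.φ.monotone (C.toBSCtx.vt_le_vt (C.sidx Z) hc)
        rw [C.toBSCtx.phi_vt_top] at h1
        have h2 : (C.toBSCtx.φ (C.toBSCtx.vt (C.sidx Z) (C.toBSCtx.φ.symm (C.yb y) (C.sidx Z)))).1 ≤
            join (C.sidx Z : L) F := h1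
        rw [C.hsidx2 Z] at h2
        exact h2⟩

lemma left_inv (C : BSCtx2 L bot F X join B Bf) :
    Function.LeftInverse C.invFun C.toFun := by
  intro t
  funext Z
  apply Subtype.ext
  have hj1 : ¬ ((C.sidx Z : L) ≤ F) := C.hsidx1 Z
  have hZ' : (⟨join (C.sidx Z : L) F, C.hmem _ hj1⟩ : maxBelow Bf X) = Z :=
    Subtype.ext (C.hsidx2 Z)
  have h2 : C.yb (C.toFun t) = C.toBSCtx.φ (C.gmap t) := Subtype.ext rfl
  have h3 : C.toBSCtx.φ.symm (C.yb (C.toFun t)) = C.gmap t := by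
    rw [h2, C.toBSCtx.φ.symm_apply_apply]
  show (C.toBSCtx.φ (C.toBSCtx.vt (C.sidx Z) (C.toBSCtx.φ.symm (C.yb (C.toFun t)) (C.sidx Z)))).1 = ((t Z).1)
  rw [h3, C.gmap_pos t hj1]
  rw [C.toBSCtx.vt_symm_eq _ (t _).2.1 (t _).2.2]
  rw [C.toBSCtx.φ.apply_symm_apply]
  exact congrArg (fun W : maxBelow Bf X => (t W).1) hZ'

lemma right_inv (C : BSCtx2 L bot F X join B Bf) :
    Function.RightInverse C.invFun C.toFun := by
  intro y
  apply Subtype.ext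
  show (C.toBSCtx.φ (C.gmap (C.invFun y))).1 = y.1
  have hs : C.gmap (C.invFun y) = C.toBSCtx.φ.symm (C.yb y) := by
    funext i
    by_cases h : (i : L) ≤ F
    · rw [C.gmap_neg _ h]
      exact (C.toBSCtx.symm_coord_of_le h (C.yb y) y.2.1).symm
    · rw [C.gmap_pos _ h]
      have hj : C.sidx ⟨join (i : L) F, C.hmem i h⟩ = i :=
        C.toBSCtx.join_inj (C.hsidx1 _) h (C.hsidx2 ⟨join (i : L) F, C.hmem i h⟩)
      have e1 : (⟨(C.invFun y ⟨join (i : L) F, C.hmem i h⟩).1, C.toBSCtx.hbot _,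
            le_trans (C.invFun y ⟨join (i : L) F, C.hmem i h⟩).2.2 (C.hmem i h).2.1⟩ :
            Set.Icc bot X)
          = C.toBSCtx.φ (C.toBSCtx.vt (C.sidx ⟨join (i : L) F, C.hmem i h⟩)
              (C.toBSCtx.φ.symm (C.yb y) (C.sidx ⟨join (i : L) F, C.hmem i h⟩))) :=
        Subtype.ext rfl
      rw [e1, C.toBSCtx.φ.symm_apply_apply, hj]
      exact Subtype.ext (C.toBSCtx.vt_self i _)
  rw [hs, C.toBSCtx.φ.apply_symm_apply]
  rfl

lemma toFun_mono (C : BSCtx2 L bot F X join B Bf) : Monotone C.toFun := by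
  intro t t' h
  exact Subtype.mk_le_mk.mpr (C.toBSCtx.φ.monotone (C.gmap_mono h))

lemma invFun_mono (C : BSCtx2 L bot F X join B Bf) : Monotone C.invFun := by
  intro y y' h Z
  have hc : C.toBSCtx.φ.symm (C.yb y) (C.sidx Z) ≤ C.toBSCtx.φ.symm (C.yb y') (C.sidx Z) :=
    C.toBSCtx.φ.symm.monotone (Subtype.mk_le_mk.mpr h) _
  exact Subtype.mk_le_mk.mpr (C.toBSCtx.φ.monotone (le_trans (C.toBSCtx.vt_le_vt _ hc) le_rfl))

noncomputable def contrEquiv (C : BSCtx2 L bot F X join B Bf) :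
    ((Z : maxBelow Bf X) → Set.Icc F (Z : L)) ≃ Set.Icc F X :=
  ⟨C.toFun, C.invFun, C.left_inv, C.right_inv⟩

noncomputable def contrIso (C : BSCtx2 L bot F X join B Bf) :
    ((Z : maxBelow Bf X) → Set.Icc F (Z : L)) ≃o Set.Icc F X :=
  (C.contrEquiv).toOrderIso C.toFun_mono C.invFun_mono

lemma toFun_unit (C : BSCtx2 L bot F X join B Bf) (hlo' : ∀ Z ∈ Bf, F ≤ Z)
    (Y : maxBelow Bf X) :
    C.toFun (unitTuple F Bf X hlo' Y) = ⟨(Y : L), hlo' _ Y.2.1, Y.2.2.1⟩ := by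
  apply Subtype.ext
  show (C.toBSCtx.φ (C.gmap (unitTuple F Bf X hlo' Y))).1 = (Y : L)
  have hg : C.gmap (unitTuple F Bf X hlo' Y) = C.toBSCtx.vt (C.sidx Y) (C.toBSCtx.topc (C.sidx Y)) := by
    funext i
    by_cases h : (i : L) ≤ F
    · have hne : i ≠ C.sidx Y := by
        intro he
        exact C.hsidx1 Y (he ▸ h)
      rw [C.gmap_neg _ h, C.toBSCtx.vt_ne _ hne]
    · rw [C.gmap_pos _ h]
      by_cases hZY : (⟨join (i : L) F, C.hmem i h⟩ : maxBelow Bf X) = Y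
      · have hsi : C.sidx Y = i := by
          apply C.toBSCtx.join_inj (C.hsidx1 Y) h
          rw [C.hsidx2 Y, ← hZY]
        have hval : (unitTuple F Bf X hlo' Y ⟨join (i : L) F, C.hmem i h⟩).1
            = join (i : L) F := by
          simp only [unitTuple]
          rw [dif_pos hZY]
        have e1 : (⟨(unitTuple F Bf X hlo' Y ⟨join (i : L) F, C.hmem i h⟩).1, C.toBSCtx.hbot _,
              le_trans (unitTuple F Bf X hlo' Y ⟨join (i : L) F, C.hmem i h⟩).2.2
                (C.hmem i h).2.1⟩ : Set.Icc bot X)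
            = ⟨join (i : L) F, C.toBSCtx.hbot _, C.toBSCtx.joinX i⟩ := Subtype.ext hval
        rw [e1, C.toBSCtx.symm_join i, hsi]
      · have hne : i ≠ C.sidx Y := by
          intro he
          apply hZY
          apply Subtype.ext
          show join (i : L) F = (Y : L)
          rw [he, C.hsidx2 Y]
        have hval : (unitTuple F Bf X hlo' Y ⟨join (i : L) F, C.hmem i h⟩).1 = F := by
          simp only [unitTuple]
          rw [dif_neg hZY]
        have e1 : (⟨(unitTuple F Bf X hlo' Y ⟨join (i : L) F, C.hmem i h⟩).1, C.toBSCtx.hbot _,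
              le_trans (unitTuple F Bf X hlo' Y ⟨join (i : L) F, C.hmem i h⟩).2.2
                (C.hmem i h).2.1⟩ : Set.Icc bot X)
            = ⟨F, C.toBSCtx.hbot F, C.toBSCtx.hFX⟩ := Subtype.ext hval
        rw [e1, C.toBSCtx.vt_ne _ hne]
        rfl
  rw [hg, C.toBSCtx.phi_vt_top]
  exact C.hsidx2 Y

lemma contr_exists (C : BSCtx2 L bot F X join B Bf) (hlo' : ∀ Z ∈ Bf, F ≤ Z) :
    ∃ φ' : ((Z : maxBelow Bf X) → Set.Icc F (Z : L)) ≃o Set.Icc F X,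
      ∀ Y : maxBelow Bf X,
        φ' (unitTuple F Bf X hlo' Y) = ⟨(Y : L), hlo' _ Y.2.1, Y.2.2.1⟩ :=
  ⟨C.contrIso, fun Y => C.toFun_unit hlo' Y⟩

end BSCtx2

end Contraction

/-- For a building set `B` of the lattice of flats of a matroid on a
finite ground set and `F ∈ B`, the contraction `B_F = {X ∨ F : X ∈ B, X ≰ F}` is a
building set of the interval `[F, ⊤]`. -/

theorem contraction_buildingSet (M : Matroid α) [M.Finite] (B : Set (FlatLat M))
    (hB : IsBuildingSetOn (botF M) (topF M) B) (F : FlatLat M) (hF : F ∈ B) :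
    IsBuildingSetOn F (topF M) {Z : FlatLat M | ∃ X ∈ B, ¬ X ≤ F ∧ Z = joinF M X F} := by
  classical
  haveI hfin : Finite (FlatLat M) := by
    have hE : Finite ↥(M.E) := M.ground_finite.to_subtype
    refine Finite.of_injective (fun F : FlatLat M => ((↑) ⁻¹' F.1 : Set ↥(M.E))) ?_
    intro F G h
    have h' : (Subtype.val ⁻¹' F.1 : Set ↥(M.E)) = Subtype.val ⁻¹' G.1 := h
    apply Subtype.ext
    ext x
    constructor
    · intro hx
      have hxE : x ∈ M.E := F.2.subset_ground hx
      have hx2 : (⟨x, hxE⟩ : ↥(M.E)) ∈ ((↑) ⁻¹' G.1 : Set ↥(M.E)) := by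
        rw [← h']; exact hx
      exact hx2
    · intro hx
      have hxE : x ∈ M.E := G.2.subset_ground hx
      have hx2 : (⟨x, hxE⟩ : ↥(M.E)) ∈ ((↑) ⁻¹' F.1 : Set ↥(M.E)) := by
        rw [h']; exact hx
      exact hx2
  obtain ⟨hBsub, hBiso⟩ := hB
  set Bf : Set (FlatLat M) := {Z : FlatLat M | ∃ X ∈ B, ¬ X ≤ F ∧ Z = joinF M X F}
    with hBfdef
  have hBfsub : Bf ⊆ Set.Icc F (topF M) \ {F} := by
    rintro Z ⟨G, hG, hGF, rfl⟩
    refine ⟨⟨le_joinF_right M G F, le_topF M _⟩, ?_⟩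
    intro hmem
    rw [Set.mem_singleton_iff] at hmem
    exact hGF (le_trans (le_joinF_left M G F) (le_of_eq hmem))
  refine ⟨hBfsub, ?_⟩
  intro X hFX hXtop hXF
  have hXbot : X ≠ botF M := by
    intro h
    exact hXF (le_antisymm ((le_of_eq h).trans (botF_le M F)) hFX)
  obtain ⟨φ, hφu⟩ := hBiso X (botF_le M X) (le_topF M X) hXbot
  obtain ⟨m0, hm0mem, hm0⟩ := exists_maxBelow_ge hF hFX
  have C1 : BSCtx (FlatLat M) (botF M) F X (joinF M) B Bf :=
    { φ := φ
      hbot := botF_le M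
      hFX := hFX
      hlo := fun Z hZ => (hBsub hZ).1.1
      hphiu := hφu
      hjl := le_joinF_left M
      hjr := le_joinF_right M
      hjle := fun {x y z} hx hy => joinF_le M hx hy
      hBbot := fun Z hZ h => (hBsub hZ).2 (Set.mem_singleton_iff.mpr h)
      j0 := ⟨m0, hm0mem⟩
      hj0 := hm0 }
  have hmem : ∀ i : maxBelow B X, ¬((i : FlatLat M) ≤ F) →
      joinF M (i : FlatLat M) F ∈ maxBelow Bf X := by
    intro i h
    refine ⟨⟨(i : FlatLat M), i.2.1, h, rfl⟩, joinF_le M i.2.2.1 hFX, ?_⟩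
    rintro Z ⟨G, hG, hGF, rfl⟩ hZX hle
    have hGX : G ≤ X := le_trans (le_joinF_left M G F) hZX
    obtain ⟨m, hmmem, hGm⟩ := exists_maxBelow_ge hG hGX
    have h2 : joinF M G F ≤ joinF M m F :=
      joinF_le M (le_trans hGm (le_joinF_left M m F)) (le_joinF_right M m F)
    by_cases hmi : (⟨m, hmmem⟩ : maxBelow B X) = i
    · have hv : m = (i : FlatLat M) := congrArg Subtype.val hmi
      rw [hv] at h2
      exact le_antisymm hle h2
    · exfalso
      have hne : i ≠ (⟨m, hmmem⟩ : maxBelow B X) := fun he => hmi he.symm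
      exact C1.not_le_join hne h
        (le_trans (le_trans (le_joinF_left M (i : FlatLat M) F) hle) h2)
  have hsur : ∀ Z : maxBelow Bf X, ∃ i : maxBelow B X,
      ¬((i : FlatLat M) ≤ F) ∧ joinF M (i : FlatLat M) F = (Z : FlatLat M) := by
    intro Z
    obtain ⟨⟨G, hG, hGF, hZG⟩, hZX, hZmax⟩ := Z.2
    have hGZ : G ≤ (Z : FlatLat M) := by rw [hZG]; exact le_joinF_left M G F
    obtain ⟨m, hmmem, hGm⟩ := exists_maxBelow_ge hG (le_trans hGZ hZX)
    have hmF : ¬ (m ≤ F) := fun hh => hGF (le_trans hGm hh)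
    have h2 : (Z : FlatLat M) ≤ joinF M m F := by
      rw [hZG]
      exact joinF_le M (le_trans hGm (le_joinF_left M m F)) (le_joinF_right M m F)
    have h3 : (Z : FlatLat M) = joinF M m F :=
      hZmax _ ⟨m, hmmem.1, hmF, rfl⟩ (joinF_le M hmmem.2.1 hFX) h2
    exact ⟨⟨m, hmmem⟩, hmF, h3.symm⟩
  choose sidx hsidx1 hsidx2 using hsur
  have C : BSCtx2 (FlatLat M) (botF M) F X (joinF M) B Bf :=
    { toBSCtx := C1
      hmem := hmem
      sidx := sidx
      hsidx1 := hsidx1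
      hsidx2 := hsidx2 }
  exact C.contr_exists (fun Z hZ => (hBfsub hZ).1.1)
end

section
/- Let B be a building set of the lattice of flats 𝓛(M) of a matroid M on a finite ground set, let F ∈ B, and let X ∈ 𝓛(M) with F < X. Writing max(B_{≤X}) = {Y₁, …, Y_k} for the factors of X, there is an order isomorphism [F, X] → ∏_{i=1}^{k} [F, F ∨ Y_i] which, for each i, sends F ∨ Y_i to the tuple equal to F ∨ Y_i in coordinate i and F in all other coordinates. -/
open Set

variable {α : Type*}

open Classical in
/-- For a building set `B` of the lattice of flats of a matroid on a
finite ground set, `F ∈ B`, and a flat `X` with `F < X`, writing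
`max(B_{≤X}) = {Y₁, …, Y_k}` for the factors of `X`, there is an order isomorphism
`[F, X] → ∏ᵢ [F, F ∨ Yᵢ]` sending, for each `i`, the element `F ∨ Yᵢ` to the tuple
equal to `F ∨ Yᵢ` in coordinate `i` and to `F` in every other coordinate. -/
theorem interval_above_product (M : Matroid α) [M.Finite] (B : Set (FlatLat M))
    (hB : IsBuildingSetOn (botF M) (topF M) B) (F : FlatLat M) (hF : F ∈ B)
    (X : FlatLat M) (hFX : F < X) :
    ∃ φ : Set.Icc F X ≃o ((Y : maxBelow B X) → Set.Icc F (joinF M F (Y : FlatLat M))),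
      ∀ Y : maxBelow B X,
        φ ⟨joinF M F (Y : FlatLat M),
            ⟨le_joinF_left M F _, joinF_le M hFX.le Y.2.2.1⟩⟩ =
          fun Z : maxBelow B X =>
            if _ : Z = Y then
              ⟨joinF M F (Z : FlatLat M), ⟨le_joinF_left M F _, le_rfl⟩⟩
            else ⟨F, ⟨le_rfl, le_joinF_left M F _⟩⟩ := by
  classical
  obtain ⟨hBsub, hmain⟩ := hB
  have hlo : ∀ Z ∈ B, botF M ≤ Z := fun Z hZ => (hBsub hZ).1.1
  have hX0 : X ≠ botF M := by
    intro h
    rw [h] at hFX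
    exact (botF_le M F).not_gt hFX
  obtain ⟨φ₀, hφ₀⟩ := hmain X (botF_le M X) (le_topF M X) hX0
  -- `F` as an element of `[⊥, X]`, and its preimage tuple `f`
  set F' : Set.Icc (botF M) X := ⟨F, botF_le M F, hFX.le⟩ with hF'
  set f : (Z : maxBelow B X) → Set.Icc (botF M) (Z : FlatLat M) := φ₀.symm F' with hf
  have hφf : φ₀ f = F' := φ₀.apply_symm_apply F'
  -- the joins `F ∨ Y` as elements of `[⊥, X]`
  have hjmem : ∀ Y : maxBelow B X, joinF M F (Y : FlatLat M) ∈ Set.Icc (botF M) X :=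
    fun Y => ⟨(botF_le M F).trans (le_joinF_left M F _), joinF_le M hFX.le Y.2.2.1⟩
  set j : maxBelow B X → Set.Icc (botF M) X :=
    fun Y => ⟨joinF M F (Y : FlatLat M), hjmem Y⟩ with hj
  -- the tuple `b Y`, equal to `Y` at coordinate `Y` and to `f` elsewhere
  set b : (Y : maxBelow B X) → (Z : maxBelow B X) → Set.Icc (botF M) (Z : FlatLat M) :=
    fun Y => Function.update f Y ⟨(Y : FlatLat M), hlo _ Y.2.1, le_rfl⟩ with hbdef
  have hfb : ∀ Y, f ≤ b Y := by
    intro Y Z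
    by_cases h : Z = Y
    · subst h
      simp only [hbdef]
      rw [Function.update_self]
      exact (f Z).2.2
    · simp only [hbdef]
      rw [Function.update_of_ne h]
  have heb : ∀ Y, unitTuple (botF M) B X hlo Y ≤ b Y := by
    intro Y Z
    by_cases h : Z = Y
    · subst h
      simp only [hbdef]
      rw [Function.update_self]
      simp only [unitTuple, dif_pos rfl]
      exact le_rfl
    · simp only [hbdef]
      rw [Function.update_of_ne h]
      simp only [unitTuple, dif_neg h]
      exact (f Z).2.1
  have hφ₀' : ∀ Y : maxBelow B X,
      φ₀ (unitTuple (botF M) B X hlo Y) = ⟨(Y : FlatLat M), hlo _ Y.2.1, Y.2.2.1⟩ :=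
    fun Y => hφ₀ Y
  -- `φ₀` maps `b Y` to `F ∨ Y`
  have hb : ∀ Y, φ₀ (b Y) = j Y := by
    intro Y
    apply le_antisymm
    · rw [← OrderIso.le_symm_apply]
      have hfg : f ≤ φ₀.symm (j Y) := by
        rw [hf]
        exact φ₀.symm.monotone (show F' ≤ j Y from le_joinF_left M F _)
      have heg : unitTuple (botF M) B X hlo Y ≤ φ₀.symm (j Y) := by
        rw [OrderIso.le_symm_apply, hφ₀' Y]
        exact le_joinF_right M F _
      intro Z
      by_cases h : Z = Y
      · subst h
        simp only [hbdef]
        rw [Function.update_self]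
        have := heg Z
        simpa only [unitTuple, dif_pos rfl, dite_true] using this
      · simp only [hbdef]
        rw [Function.update_of_ne h]
        exact hfg Z
    · have h1 : F' ≤ φ₀ (b Y) := hφf ▸ φ₀.monotone (hfb Y)
      have h2 : (⟨(Y : FlatLat M), hlo _ Y.2.1, Y.2.2.1⟩ : Set.Icc (botF M) X) ≤ φ₀ (b Y) :=
        hφ₀' Y ▸ φ₀.monotone (heb Y)
      exact joinF_le M h1 h2
  have hsymm_j : ∀ Y, φ₀.symm (j Y) = b Y := fun Y => by
    rw [← hb Y, OrderIso.symm_apply_apply]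
  -- key segment lemma: preimages of elements of `[F, F ∨ Y]` agree with `f` off coordinate `Y`
  have hseg : ∀ (Y : maxBelow B X) (s : Set.Icc (botF M) X), F' ≤ s → s ≤ j Y →
      ∀ Z, Z ≠ Y → φ₀.symm s Z = f Z := by
    intro Y s h1 h2 Z hZ
    refine le_antisymm ?_ ?_
    · have := φ₀.symm.monotone h2 Z
      rw [hsymm_j] at this
      simp only [hbdef] at this
      rwa [Function.update_of_ne hZ] at this
    · have := φ₀.symm.monotone h1 Z
      rwa [← hf] at this
  -- embeddings of the two kinds of intervals into `[⊥, X]`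
  set emb : Set.Icc F X → Set.Icc (botF M) X :=
    fun t => ⟨t.1, (botF_le M F).trans t.2.1, t.2.2⟩ with hemb
  set emb2 : (Y : maxBelow B X) → Set.Icc F (joinF M F (Y : FlatLat M)) → Set.Icc (botF M) X :=
    fun Y u => ⟨u.1, (botF_le M F).trans u.2.1, u.2.2.trans (joinF_le M hFX.le Y.2.2.1)⟩ with hemb2
  have hfle : ∀ t : Set.Icc F X, f ≤ φ₀.symm (emb t) := by
    intro t
    rw [hf]
    exact φ₀.symm.monotone (show F' ≤ emb t from t.2.1)
  -- the forward map, coordinatewise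
  have hu1 : ∀ (t : Set.Icc F X) (Y : maxBelow B X),
      f ≤ Function.update f Y (φ₀.symm (emb t) Y) := by
    intro t Y Z
    by_cases h : Z = Y
    · subst h
      rw [Function.update_self]
      exact hfle t Z
    · rw [Function.update_of_ne h]
  have hu2 : ∀ (t : Set.Icc F X) (Y : maxBelow B X),
      Function.update f Y (φ₀.symm (emb t) Y) ≤ b Y := by
    intro t Y Z
    by_cases h : Z = Y
    · subst h
      rw [Function.update_self]
      simp only [hbdef]
      rw [Function.update_self]
      exact (φ₀.symm (emb t) Z).2.2
    · rw [Function.update_of_ne h]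
      simp only [hbdef]
      rw [Function.update_of_ne h]
  have hmem1 : ∀ (t : Set.Icc F X) (Y : maxBelow B X),
      (φ₀ (Function.update f Y (φ₀.symm (emb t) Y))).1 ∈
        Set.Icc F (joinF M F (Y : FlatLat M)) := by
    intro t Y
    constructor
    · have : F' ≤ φ₀ (Function.update f Y (φ₀.symm (emb t) Y)) :=
        hφf ▸ φ₀.monotone (hu1 t Y)
      exact this
    · have : φ₀ (Function.update f Y (φ₀.symm (emb t) Y)) ≤ j Y :=
        hb Y ▸ φ₀.monotone (hu2 t Y)
      exact this
  set ψ : Set.Icc F X → ((Y : maxBelow B X) → Set.Icc F (joinF M F (Y : FlatLat M))) :=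
    fun t Y => ⟨(φ₀ (Function.update f Y (φ₀.symm (emb t) Y))).1, hmem1 t Y⟩ with hψ
  -- the inverse map
  set g : ((Y : maxBelow B X) → Set.Icc F (joinF M F (Y : FlatLat M))) →
      ((Z : maxBelow B X) → Set.Icc (botF M) (Z : FlatLat M)) :=
    fun s Z => φ₀.symm (emb2 Z (s Z)) Z with hg
  have hfg : ∀ s, f ≤ g s := by
    intro s Z
    have : f ≤ φ₀.symm (emb2 Z (s Z)) := by
      rw [hf]
      exact φ₀.symm.monotone (show F' ≤ emb2 Z (s Z) from (s Z).2.1)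
    exact this Z
  have hmem2 : ∀ s : (Y : maxBelow B X) → Set.Icc F (joinF M F (Y : FlatLat M)),
      (φ₀ (g s)).1 ∈ Set.Icc F X := by
    intro s
    constructor
    · have : F' ≤ φ₀ (g s) := hφf ▸ φ₀.monotone (hfg s)
      exact this
    · exact (φ₀ (g s)).2.2
  set χ : ((Y : maxBelow B X) → Set.Icc F (joinF M F (Y : FlatLat M))) → Set.Icc F X :=
    fun s => ⟨(φ₀ (g s)).1, hmem2 s⟩ with hχ
  -- χ ∘ ψ = id
  have hgψ : ∀ t, g (ψ t) = φ₀.symm (emb t) := by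
    intro t
    funext Y
    have hval : emb2 Y (ψ t Y) = φ₀ (Function.update f Y (φ₀.symm (emb t) Y)) :=
      Subtype.ext rfl
    rw [hg]
    dsimp only
    rw [hval, OrderIso.symm_apply_apply, Function.update_self]
  have hleft : ∀ t, χ (ψ t) = t := by
    intro t
    apply Subtype.ext
    show (φ₀ (g (ψ t))).1 = t.1
    rw [hgψ t, OrderIso.apply_symm_apply]
  -- ψ ∘ χ = id
  have hupdg : ∀ (s : (Y : maxBelow B X) → Set.Icc F (joinF M F (Y : FlatLat M)))
      (Y : maxBelow B X),
      Function.update f Y (g s Y) = φ₀.symm (emb2 Y (s Y)) := by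
    intro s Y
    funext Z
    by_cases h : Z = Y
    · subst h
      rw [Function.update_self]
    · rw [Function.update_of_ne h]
      exact (hseg Y (emb2 Y (s Y)) (s Y).2.1 (s Y).2.2 Z h).symm
  have hright : ∀ s, ψ (χ s) = s := by
    intro s
    funext Y
    apply Subtype.ext
    show (φ₀ (Function.update f Y (φ₀.symm (emb (χ s)) Y))).1 = (s Y).1
    have hembχ : emb (χ s) = φ₀ (g s) := Subtype.ext rfl
    rw [hembχ, OrderIso.symm_apply_apply]
    rw [show Function.update f Y (g s Y) = φ₀.symm (emb2 Y (s Y)) from hupdg s Y]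
    rw [OrderIso.apply_symm_apply]
  -- monotonicity
  have hψmono : Monotone ψ := by
    intro t t' htt Y
    show (φ₀ (Function.update f Y (φ₀.symm (emb t) Y))).1 ≤
      (φ₀ (Function.update f Y (φ₀.symm (emb t') Y))).1
    apply φ₀.monotone
    intro Z
    by_cases h : Z = Y
    · subst h
      rw [Function.update_self, Function.update_self]
      exact φ₀.symm.monotone (show emb t ≤ emb t' from htt) Z
    · rw [Function.update_of_ne h, Function.update_of_ne h]
  have hχmono : Monotone χ := by
    intro s s' hss
    show (φ₀ (g s)).1 ≤ (φ₀ (g s')).1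
    apply φ₀.monotone
    intro Z
    exact φ₀.symm.monotone (show emb2 Z (s Z) ≤ emb2 Z (s' Z) from hss Z) Z
  -- assemble the order isomorphism
  refine ⟨{ toFun := ψ, invFun := χ, left_inv := hleft, right_inv := hright,
            map_rel_iff' := ?_ }, ?_⟩
  · intro t t'
    show ψ t ≤ ψ t' ↔ t ≤ t'
    constructor
    · intro h
      have := hχmono h
      rwa [hleft, hleft] at this
    · exact fun h => hψmono h
  · -- the unit tuple condition
    intro Y
    funext Z
    apply Subtype.ext
    show (φ₀ (Function.update f Z (φ₀.symm (emb ⟨joinF M F (Y : FlatLat M), _⟩) Z))).1 =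
      ((if _ : Z = Y then
          (⟨joinF M F (Z : FlatLat M), ⟨le_joinF_left M F _, le_rfl⟩⟩ :
            Set.Icc F (joinF M F (Z : FlatLat M)))
        else ⟨F, ⟨le_rfl, le_joinF_left M F _⟩⟩) : Set.Icc F (joinF M F (Z : FlatLat M))).1
    have hembj : emb ⟨joinF M F (Y : FlatLat M),
        ⟨le_joinF_left M F _, joinF_le M hFX.le Y.2.2.1⟩⟩ = j Y := Subtype.ext rfl
    rw [hembj, hsymm_j Y]
    by_cases h : Z = Y
    · subst h
      rw [dif_pos rfl]
      simp only [hbdef]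
      rw [Function.update_self]
      have : Function.update f Z (⟨(Z : FlatLat M), hlo _ Z.2.1, le_rfl⟩ :
          Set.Icc (botF M) (Z : FlatLat M)) = b Z := by rw [hbdef]
      rw [this, hb Z]
    · rw [dif_neg h]
      simp only [hbdef]
      rw [Function.update_of_ne h]
      have : Function.update f Z (f Z) = f := by
        funext W
        by_cases hW : W = Z
        · subst hW; rw [Function.update_self]
        · rw [Function.update_of_ne hW]
      rw [this, hφf]
end

section
/- Let B be a building set of the lattice of flats 𝓛(M) of a matroid M on a finite ground set, assume the top flat ⊤ belongs to B, and let F ∈ B with F ≠ ⊤. Let B₀ = {X ∈ B ∖ {F} : {X, F} is a nested set of B} (the vertex set of the link 𝒩(B)_F), and define τ : B₀ → 𝓛(M) by τ(X) = X if X is comparable to F, and τ(X) = X ∨ F if X is incomparable to F. Then τ is a bijection from B₀ onto the disjoint union (B^F ∖ {F}) ∪ (B_F ∖ {⊤}), i.e. onto the disjoint union of the vertex sets of 𝒩(B^F) and 𝒩(B_F). -/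
open Set

variable {α : Type*}

/-- The set of maximal elements of `B`, denoted `B^top`. -/
def maxElems {L : Type*} [PartialOrder L] (B : Set L) : Set L :=
  {Y | Y ∈ B ∧ ∀ Z ∈ B, Y ≤ Z → Y = Z}

/-- The join `X₁ ∨ ⋯ ∨ X_t` of a finite collection of flats:
the closure of their union. -/
def joinFinset (M : Matroid α) (T : Finset (FlatLat M)) : FlatLat M :=
  ⟨M.closure (⋃ X ∈ T, (X : FlatLat M).1), M.closure_flat' _⟩

/-- `S` is a nested set with respect to `B`: `S` is a finite subset of `B ∖ B^top`
such that for every subset `{X₁, …, X_t} ⊆ S` of pairwise incomparable elements with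
`t ≥ 2`, the join `X₁ ∨ ⋯ ∨ X_t` does not lie in `B`. -/
def IsNested (M : Matroid α) (B S : Set (FlatLat M)) : Prop :=
  S.Finite ∧ S ⊆ B \ maxElems B ∧
    ∀ T : Finset (FlatLat M), ↑T ⊆ S → 2 ≤ T.card →
      (∀ X ∈ T, ∀ Y ∈ T, X ≠ Y → ¬ X ≤ Y ∧ ¬ Y ≤ X) →
      joinFinset M T ∉ B

open Classical in
/-- The map `τ`: the identity on flats comparable to `F`, and `X ↦ X ∨ F` on flats
incomparable to `F`. -/
noncomputable def tau (M : Matroid α) (F X : FlatLat M) : FlatLat M :=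
  if X ≤ F ∨ F ≤ X then X else joinF M X F

section Helpers

lemma joinF_eq_of_le (M : Matroid α) {X F : FlatLat M} (h : F ≤ X) : joinF M X F = X :=
  le_antisymm (joinF_le M le_rfl h) (le_joinF_left M X F)

lemma joinF_eq_of_le' (M : Matroid α) {X F : FlatLat M} (h : X ≤ F) : joinF M X F = F :=
  le_antisymm (joinF_le M h le_rfl) (le_joinF_right M X F)

lemma flatLat_finite_s6 (M : Matroid α) [M.Finite] : Finite (FlatLat M) := by
  have h : {F : Set α | M.IsFlat F}.Finite :=
    M.ground_finite.finite_subsets.subset fun F hF => hF.subset_ground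
  exact h.to_subtype

lemma joinFinset_eq (M : Matroid α) (T : Finset (FlatLat M)) {X F : FlatLat M}
    (h : (↑T : Set (FlatLat M)) = {X, F}) : joinFinset M T = joinF M X F := by
  apply Subtype.ext
  show M.closure _ = M.closure _
  congr 1
  have : (⋃ Y ∈ T, (Y : FlatLat M).1) = ⋃ Y ∈ (↑T : Set (FlatLat M)), (Y : FlatLat M).1 := by
    simp
  rw [this, h, Set.biUnion_pair]

lemma not_maxElems_of_ne_top (M : Matroid α) {B : Set (FlatLat M)} (htop : topF M ∈ B)
    {X : FlatLat M} (hXt : X ≠ topF M) : X ∉ maxElems B :=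
  fun h => hXt (h.2 _ htop (le_topF M X))

lemma topF_mem_maxElems (M : Matroid α) {B : Set (FlatLat M)} (htop : topF M ∈ B) :
    topF M ∈ maxElems B :=
  ⟨htop, fun Z _ hle => le_antisymm hle (le_topF M Z)⟩

lemma ne_top_of_isNested (M : Matroid α) {B S : Set (FlatLat M)} (htop : topF M ∈ B)
    (h : IsNested M B S) {X : FlatLat M} (hX : X ∈ S) : X ≠ topF M := by
  rintro rfl
  exact (h.2.1 hX).2 (topF_mem_maxElems M htop)

lemma isNested_pair (M : Matroid α) {B : Set (FlatLat M)} (htop : topF M ∈ B)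
    {X F : FlatLat M} (hX : X ∈ B) (hF : F ∈ B) (hXt : X ≠ topF M) (hFt : F ≠ topF M)
    (h : (X ≤ F ∨ F ≤ X) ∨ joinF M X F ∉ B) : IsNested M B {X, F} := by
  refine ⟨(Set.finite_singleton F).insert X, ?_, ?_⟩
  · rintro Y (rfl | rfl)
    · exact ⟨hX, not_maxElems_of_ne_top M htop hXt⟩
    · exact ⟨hF, not_maxElems_of_ne_top M htop hFt⟩
  · intro T hT hcard hinc
    obtain ⟨a, b, ha, hb, hab⟩ := Finset.one_lt_card_iff.mp hcard
    have ha' := hT ha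
    have hb' := hT hb
    simp only [Set.mem_insert_iff, Set.mem_singleton_iff] at ha' hb'
    have key : X ∈ T ∧ F ∈ T ∧ X ≠ F := by
      rcases ha' with rfl | rfl <;> rcases hb' with rfl | rfl
      · exact absurd rfl hab
      · exact ⟨ha, hb, hab⟩
      · exact ⟨hb, ha, hab.symm⟩
      · exact absurd rfl hab
    rcases h with hcomp | hjoin
    · have hi := hinc X key.1 F key.2.1 key.2.2
      rcases hcomp with h' | h'
      · exact absurd h' hi.1
      · exact absurd h' hi.2
    · have hTeq : (↑T : Set (FlatLat M)) = {X, F} := by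
        apply Set.Subset.antisymm hT
        rintro Y (rfl | rfl)
        · exact key.1
        · exact key.2.1
      rw [joinFinset_eq M T hTeq]
      exact hjoin

lemma join_not_mem_of_nested (M : Matroid α) {B : Set (FlatLat M)} {X F : FlatLat M}
    (h : IsNested M B {X, F}) (h1 : ¬ X ≤ F) (h2 : ¬ F ≤ X) : joinF M X F ∉ B := by
  classical
  have hXF : X ≠ F := fun e => h1 (e ▸ le_rfl)
  have hsub : (↑({X, F} : Finset (FlatLat M)) : Set (FlatLat M)) = {X, F} := by simp
  have := h.2.2 {X, F} (by rw [hsub]) ?_ ?_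
  · rwa [joinFinset_eq M _ hsub] at this
  · rw [Finset.card_insert_of_notMem (by simpa using hXF), Finset.card_singleton]
  · intro a ha b hb hne
    simp only [Finset.mem_insert, Finset.mem_singleton] at ha hb
    rcases ha with rfl | rfl <;> rcases hb with rfl | rfl
    · exact absurd rfl hne
    · exact ⟨h1, h2⟩
    · exact ⟨h2, h1⟩
    · exact absurd rfl hne

end Helpers

lemma factor_eq (M : Matroid α) [M.Finite] {B : Set (FlatLat M)}
    (hB : IsBuildingSetOn (botF M) (topF M) B) {X F Z : FlatLat M}
    (hX : X ∈ B) (hF : F ∈ B) (h1 : ¬ X ≤ F) (h2 : ¬ F ≤ X)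
    (hZ : joinF M X F = Z) (hZB : Z ∉ B) :
    ∃ gx gf : maxBelow B Z, X = (gx : FlatLat M) ∧ F = (gf : FlatLat M) ∧ gx ≠ gf ∧
      ∀ g : maxBelow B Z, g = gx ∨ g = gf := by
  classical
  obtain ⟨hBsub, hBiso⟩ := hB
  have hfin : Finite (FlatLat M) := flatLat_finite_s6 M
  have hXZ : X ≤ Z := hZ ▸ le_joinF_left M X F
  have hFZ : F ≤ Z := hZ ▸ le_joinF_right M X F
  have hFbot : F ≠ botF M := fun e => (hBsub hF).2 (by simp [e])
  have hZbot : Z ≠ botF M := fun e => hFbot (le_antisymm (e ▸ hFZ) (botF_le M F))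
  obtain ⟨φ, hφ⟩ := hBiso Z (botF_le M Z) (le_topF M Z) hZbot
  -- every element of B below Z lies below a factor
  have exmax : ∀ Y : FlatLat M, Y ∈ B → Y ≤ Z → ∃ g : maxBelow B Z, Y ≤ (g : FlatLat M) := by
    intro Y hY hYZ
    have hmem : Y ∈ {W : FlatLat M | W ∈ B ∧ W ≤ Z} := ⟨hY, hYZ⟩
    obtain ⟨m, hm, hmax⟩ := (Set.toFinite _).exists_le_maximal hmem
    exact ⟨⟨m, hmax.1.1, hmax.1.2, fun W hW hWZ hmW => le_antisymm hmW (hmax.2 ⟨hW, hWZ⟩ hmW)⟩, hm⟩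
  obtain ⟨gx, hgx⟩ := exmax X hX hXZ
  obtain ⟨gf, hgf⟩ := exmax F hF hFZ
  have hne : gx ≠ gf := by
    rintro rfl
    have hle : Z ≤ (gx : FlatLat M) := (le_of_eq hZ.symm).trans (joinF_le M hgx hgf)
    have hEq : (gx : FlatLat M) = Z := le_antisymm gx.2.2.1 hle
    exact hZB (hEq ▸ gx.2.1)
  set hlo := fun (W : FlatLat M) (hW : W ∈ B) => (hBsub hW).1.1 with hlodef
  set u := φ.symm ⟨X, botF_le M X, hXZ⟩ with hu
  set v := φ.symm ⟨F, botF_le M F, hFZ⟩ with hv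
  have hφu : φ u = ⟨X, botF_le M X, hXZ⟩ := φ.apply_symm_apply _
  have hφv : φ v = ⟨F, botF_le M F, hFZ⟩ := φ.apply_symm_apply _
  -- u is below the unit tuple at gx, v below the unit tuple at gf
  have hule : u ≤ unitTuple (botF M) B Z hlo gx := by
    rw [← φ.le_iff_le, hφu, hφ gx]
    exact hgx
  have hvle : v ≤ unitTuple (botF M) B Z hlo gf := by
    rw [← φ.le_iff_le, hφv, hφ gf]
    exact hgf
  have hucoord : ∀ g, g ≠ gx → (u g : FlatLat M) = botF M := by
    intro g hg
    have h := hule g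
    simp only [unitTuple, dif_neg hg] at h
    exact le_antisymm h (u g).2.1
  have hvcoord : ∀ g, g ≠ gf → (v g : FlatLat M) = botF M := by
    intro g hg
    have h := hvle g
    simp only [unitTuple, dif_neg hg] at h
    exact le_antisymm h (v g).2.1
  -- the coordinatewise join of u and v
  set w : (g : maxBelow B Z) → Set.Icc (botF M) (g : FlatLat M) :=
    fun g => ⟨joinF M (u g) (v g), botF_le M _, joinF_le M (u g).2.2 (v g).2.2⟩ with hwdef
  have huw : u ≤ w := fun g => le_joinF_left M _ _
  have hvw : v ≤ w := fun g => le_joinF_right M _ _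
  -- the top tuple
  set tp : (g : maxBelow B Z) → Set.Icc (botF M) (g : FlatLat M) :=
    fun g => ⟨(g : FlatLat M), botF_le M _, le_rfl⟩ with htpdef
  have htp : ∀ t, t ≤ tp := fun t g => (t g).2.2
  have hφtp : ((φ tp : Set.Icc (botF M) Z) : FlatLat M) = Z := by
    have hle1 : ((φ tp : Set.Icc (botF M) Z) : FlatLat M) ≤ Z := (φ tp).2.2
    have hle2 : φ (φ.symm ⟨Z, botF_le M Z, le_rfl⟩) ≤ φ tp := φ.le_iff_le.mpr (htp _)
    rw [φ.apply_symm_apply] at hle2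
    exact le_antisymm hle1 hle2
  have hφw : ((φ w : Set.Icc (botF M) Z) : FlatLat M) = Z := by
    have hle1 : ((φ w : Set.Icc (botF M) Z) : FlatLat M) ≤ Z := (φ w).2.2
    have hXw : X ≤ ((φ w : Set.Icc (botF M) Z) : FlatLat M) := by
      have h := φ.le_iff_le.mpr huw
      rw [hφu] at h
      exact h
    have hFw : F ≤ ((φ w : Set.Icc (botF M) Z) : FlatLat M) := by
      have h := φ.le_iff_le.mpr hvw
      rw [hφv] at h
      exact h
    exact le_antisymm hle1 ((le_of_eq hZ.symm).trans (joinF_le M hXw hFw))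
  have hwtp : w = tp := φ.injective (Subtype.ext (hφw.trans hφtp.symm))
  -- all factors are gx or gf
  have hall : ∀ g : maxBelow B Z, g = gx ∨ g = gf := by
    intro g
    by_contra hcon
    push_neg at hcon
    have h1 := hucoord g hcon.1
    have h2 := hvcoord g hcon.2
    have h3 : joinF M (u g) (v g) = (g : FlatLat M) := congrArg Subtype.val (congrFun hwtp g)
    rw [h1, h2, joinF_eq_of_le M le_rfl] at h3
    exact (hBsub g.2.1).2 (by simp [← h3])
  -- value of u at gx
  have hugx : (u gx : FlatLat M) = (gx : FlatLat M) := by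
    have h3 : joinF M (u gx) (v gx) = (gx : FlatLat M) := congrArg Subtype.val (congrFun hwtp gx)
    rw [hvcoord gx hne, joinF_eq_of_le M (botF_le M _)] at h3
    exact h3
  have hvgf : (v gf : FlatLat M) = (gf : FlatLat M) := by
    have h3 : joinF M (u gf) (v gf) = (gf : FlatLat M) := congrArg Subtype.val (congrFun hwtp gf)
    rw [hucoord gf (Ne.symm hne), joinF_eq_of_le' M (botF_le M _)] at h3
    exact h3
  -- u is the unit tuple at gx, v at gf
  have huu : u = unitTuple (botF M) B Z hlo gx := by
    funext g
    by_cases h : g = gx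
    · subst h
      exact Subtype.ext (by simp only [unitTuple, dif_pos]; exact hugx)
    · exact Subtype.ext (by simp only [unitTuple, dif_neg h]; exact hucoord g h)
  have hvv : v = unitTuple (botF M) B Z hlo gf := by
    funext g
    by_cases h : g = gf
    · subst h
      exact Subtype.ext (by simp only [unitTuple, dif_pos]; exact hvgf)
    · exact Subtype.ext (by simp only [unitTuple, dif_neg h]; exact hvcoord g h)
  have hXgx : X = (gx : FlatLat M) := by
    have h := hφ gx
    rw [← huu, hφu] at h
    exact congrArg Subtype.val h
  have hFgf : F = (gf : FlatLat M) := by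
    have h := hφ gf
    rw [← hvv, hφv] at h
    exact congrArg Subtype.val h
  exact ⟨gx, gf, hXgx, hFgf, hne, hall⟩


/-- Let `B` be a building set of the lattice of flats of a matroid on
a finite ground set with `⊤ ∈ B`, and let `F ∈ B` with `F ≠ ⊤`. Let
`B₀ = {X ∈ B ∖ {F} : {X, F} is nested}` (the vertex set of the link `𝒩(B)_F`), and let
`τ(X) = X` for `X` comparable to `F` and `τ(X) = X ∨ F` otherwise. Then `τ` is a
bijection from `B₀` onto the disjoint union `(B^F ∖ {F}) ∪ (B_F ∖ {⊤})`, i.e. onto the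
disjoint union of the vertex sets of `𝒩(B^F)` and `𝒩(B_F)`. -/
theorem link_vertex_bijection (M : Matroid α) [M.Finite] (B : Set (FlatLat M))
    (hB : IsBuildingSetOn (botF M) (topF M) B)
    (htop : topF M ∈ B) (F : FlatLat M) (hF : F ∈ B) (hFtop : F ≠ topF M) :
    Set.BijOn (tau M F)
      {X : FlatLat M | X ∈ B ∧ X ≠ F ∧ IsNested M B {X, F}}
      (({X : FlatLat M | X ∈ B ∧ X ≤ F} \ {F}) ∪
        ({Z : FlatLat M | ∃ X ∈ B, ¬ X ≤ F ∧ Z = joinF M X F} \ {topF M})) ∧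
    Disjoint ({X : FlatLat M | X ∈ B ∧ X ≤ F} \ {F})
      ({Z : FlatLat M | ∃ X ∈ B, ¬ X ≤ F ∧ Z = joinF M X F} \ {topF M}) := by
  
  classical
  constructor
  · refine ⟨?_, ?_, ?_⟩
    · -- MapsTo
      rintro X ⟨hXB, hXF, hnest⟩
      have hXtop : X ≠ topF M := ne_top_of_isNested M htop hnest (Set.mem_insert _ _)
      by_cases hc : X ≤ F ∨ F ≤ X
      · rw [tau, if_pos hc]
        rcases hc with h | h
        · exact Or.inl ⟨⟨hXB, h⟩, by simpa using hXF⟩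
        · refine Or.inr ⟨⟨X, hXB, fun h' => hXF (le_antisymm h' h),
            (joinF_eq_of_le M h).symm⟩, by simpa using hXtop⟩
      · push_neg at hc
        rw [tau, if_neg (not_or.mpr ⟨hc.1, hc.2⟩)]
        have hjoin : joinF M X F ∉ B := join_not_mem_of_nested M hnest hc.1 hc.2
        refine Or.inr ⟨⟨X, hXB, hc.1, rfl⟩, ?_⟩
        intro he
        rw [Set.mem_singleton_iff] at he
        exact hjoin (he ▸ htop)
    · -- InjOn
      rintro X₁ ⟨h1B, h1F, h1n⟩ X₂ ⟨h2B, h2F, h2n⟩ heq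
      by_cases c1 : X₁ ≤ F ∨ F ≤ X₁ <;> by_cases c2 : X₂ ≤ F ∨ F ≤ X₂
      · rwa [tau, if_pos c1, tau, if_pos c2] at heq
      · exfalso
        push_neg at c2
        rw [tau, if_pos c1, tau, if_neg (not_or.mpr ⟨c2.1, c2.2⟩)] at heq
        exact (join_not_mem_of_nested M h2n c2.1 c2.2) (heq ▸ h1B)
      · exfalso
        push_neg at c1
        rw [tau, if_neg (not_or.mpr ⟨c1.1, c1.2⟩), tau, if_pos c2] at heq
        exact (join_not_mem_of_nested M h1n c1.1 c1.2) (heq.symm ▸ h2B)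
      · push_neg at c1; push_neg at c2
        rw [tau, if_neg (not_or.mpr ⟨c1.1, c1.2⟩), tau, if_neg (not_or.mpr ⟨c2.1, c2.2⟩)] at heq
        have hZB : joinF M X₁ F ∉ B := join_not_mem_of_nested M h1n c1.1 c1.2
        obtain ⟨gx1, gf1, hX1, hF1, hne1, hall1⟩ :=
          factor_eq M hB h1B hF c1.1 c1.2 rfl hZB
        obtain ⟨gx2, gf2, hX2, hF2, hne2, hall2⟩ :=
          factor_eq M hB h2B hF c2.1 c2.2 heq.symm hZB
        have hgf : gf2 = gf1 := Subtype.ext (hF2.symm.trans hF1)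
        rcases hall1 gx2 with h | h
        · rw [hX1, hX2, h]
        · exfalso
          exact h2F (hX2.trans ((congrArg Subtype.val h).trans hF1.symm))
    · -- SurjOn
      rintro Z (⟨⟨hZB, hZF⟩, hZne⟩ | ⟨⟨X, hXB, hXF, rfl⟩, hZne⟩)
      · have hZF' : Z ≠ F := by simpa using hZne
        have hZt : Z ≠ topF M := fun e => hFtop (le_antisymm (le_topF M F) (e ▸ hZF))
        refine ⟨Z, ⟨hZB, hZF', isNested_pair M htop hZB hF hZt hFtop (Or.inl (Or.inl hZF))⟩, ?_⟩
        rw [tau, if_pos (Or.inl hZF)]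
      · rw [Set.mem_singleton_iff] at hZne
        by_cases hJB : joinF M X F ∈ B
        · have hFle : F ≤ joinF M X F := le_joinF_right M X F
          have hne : joinF M X F ≠ F := fun e => hXF (e ▸ le_joinF_left M X F)
          refine ⟨joinF M X F, ⟨hJB, hne,
            isNested_pair M htop hJB hF hZne hFtop (Or.inl (Or.inr hFle))⟩, ?_⟩
          rw [tau, if_pos (Or.inr hFle)]
        · by_cases hFX : F ≤ X
          · exact absurd (by rw [joinF_eq_of_le M hFX]; exact hXB) hJB
          · have hXt : X ≠ topF M := fun e =>
              hZne (le_antisymm (le_topF M _) (e ▸ le_joinF_left M X F))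
            refine ⟨X, ⟨hXB, fun e => hXF (e ▸ le_rfl),
              isNested_pair M htop hXB hF hXt hFtop (Or.inr hJB)⟩, ?_⟩
            rw [tau, if_neg (not_or.mpr ⟨hXF, hFX⟩)]
  · rw [Set.disjoint_left]
    rintro Z ⟨⟨hZB, hZF⟩, hZne⟩ ⟨⟨X, hXB, hXF, rfl⟩, -⟩
    have : joinF M X F ≠ F := by simpa using hZne
    exact this (le_antisymm hZF (le_joinF_right M X F))
end

section
/- Let V be an n-dimensional real vector space, let Ĉ ⊆ V be a full-dimensional pointed polyhedral cone (Ĉ = cone(S₀) for a finite set S₀ spanning V, with Ĉ ∩ (−Ĉ) = {0}), and let 𝒯 be a triangulation of Ĉ by simplicial cones of dimension n. Let W ⊆ V be a linear subspace such that Ĉ ∩ W is an extreme subset (face) of Ĉ, and set d = dim span_ℝ(Ĉ ∩ W). Then the collection 𝒯_W = {T ∩ W : T ∈ 𝒯, dim span_ℝ(T ∩ W) = d} is a triangulation of Ĉ ∩ W: each member is a simplicial cone of dimension d contained in W, the union of the members equals Ĉ ∩ W, and any two members intersect in a common face. -/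
open Set

/-- `coneFin S`: the cone of all nonnegative real linear combinations of elements of a
finite set `S`. -/
def coneFin (M : Type*) [AddCommGroup M] [Module ℝ M] (S : Finset M) : Set M :=
  {x | ∃ c : M → ℝ, (∀ v ∈ S, 0 ≤ c v) ∧ x = ∑ v ∈ S, c v • v}

/-- A simplicial cone of dimension `d`: a set of the form `coneFin S` with `S`
linearly independent of cardinality `d`. -/
def IsSimplicialCone (M : Type*) [AddCommGroup M] [Module ℝ M] (d : ℕ) (T : Set M) :
    Prop :=
  ∃ S : Finset M, LinearIndependent ℝ (fun v : (S : Set M) => (v : M)) ∧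
    S.card = d ∧ T = coneFin M S

/-- `𝒯` is a triangulation of `C` by simplicial cones of dimension `d`: a finite
collection of simplicial cones of dimension `d` whose union is `C`, such that any two
members `T = coneFin S_T` and `T' = coneFin S_{T'}` intersect in a common face, i.e.
there are `S ⊆ S_T` and `S' ⊆ S_{T'}` with `coneFin S = coneFin S' = T ∩ T'`. -/
def IsTriangulation (M : Type*) [AddCommGroup M] [Module ℝ M] (d : ℕ)
    (C : Set M) (𝒯 : Set (Set M)) : Prop :=
  𝒯.Finite ∧
  (∀ T ∈ 𝒯, IsSimplicialCone M d T) ∧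
  (⋃ T ∈ 𝒯, T) = C ∧
  ∀ T ∈ 𝒯, ∀ T' ∈ 𝒯, ∀ ST : Finset M,
    (LinearIndependent ℝ (fun v : (ST : Set M) => (v : M)) ∧ ST.card = d ∧
      T = coneFin M ST) →
    ∀ ST' : Finset M,
    (LinearIndependent ℝ (fun v : (ST' : Set M) => (v : M)) ∧ ST'.card = d ∧
      T' = coneFin M ST') →
    ∃ S ⊆ ST, ∃ S' ⊆ ST', coneFin M S = T ∩ T' ∧ coneFin M S' = T ∩ T'

section Helpers

variable {V : Type*} [AddCommGroup V] [Module ℝ V]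

lemma coneFin_zero_mem (S : Finset V) : (0:V) ∈ coneFin V S :=
  ⟨0, fun _ _ => le_refl 0, by simp⟩

lemma coneFin_self_mem {S : Finset V} {v : V} (hv : v ∈ S) : v ∈ coneFin V S := by
  classical
  refine ⟨fun w => if w = v then 1 else 0, fun w _ => by dsimp only; split <;> norm_num, ?_⟩
  simp only [ite_smul, one_smul, zero_smul]
  rw [Finset.sum_ite_eq' S v (fun w => w)]
  simp [hv]

lemma coneFin_add {S : Finset V} {x y : V} (hx : x ∈ coneFin V S) (hy : y ∈ coneFin V S) :
    x + y ∈ coneFin V S := by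
  obtain ⟨c, hc, rfl⟩ := hx; obtain ⟨e, he, rfl⟩ := hy
  exact ⟨c + e, fun v hv => add_nonneg (hc v hv) (he v hv), by
    rw [← Finset.sum_add_distrib]; simp [add_smul]⟩

lemma coneFin_smul {S : Finset V} {x : V} {a : ℝ} (ha : 0 ≤ a) (hx : x ∈ coneFin V S) :
    a • x ∈ coneFin V S := by
  obtain ⟨c, hc, rfl⟩ := hx
  exact ⟨a • c, fun v hv => mul_nonneg ha (hc v hv), by
    rw [Finset.smul_sum]; simp [smul_smul]⟩

lemma coneFin_convex (S : Finset V) : Convex ℝ (coneFin V S) := by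
  intro x hx y hy a b ha hb _
  exact coneFin_add (coneFin_smul ha hx) (coneFin_smul hb hy)

lemma coneFin_subset_span (S : Finset V) : coneFin V S ⊆ (Submodule.span ℝ (S : Set V) : Set V) := by
  rintro x ⟨c, -, rfl⟩
  exact Submodule.sum_mem _ fun v hv => Submodule.smul_mem _ _ (Submodule.subset_span hv)

lemma coneFin_mono {S S' : Finset V} (h : S ⊆ S') : coneFin V S ⊆ coneFin V S' := by
  classical
  rintro x ⟨c, hc, rfl⟩
  refine ⟨fun v => if v ∈ S then c v else 0, fun v _ => ?_, ?_⟩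
  · dsimp only; split
    · exact hc v ‹_›
    · exact le_refl 0
  · have := Finset.sum_subset h (f := fun v => (if v ∈ S then c v else 0) • v)
      (fun v _ hv => by simp [hv])
    rw [← this]
    exact (Finset.sum_congr rfl fun v hv => by simp [hv]).symm

lemma span_coneFin (S : Finset V) :
    Submodule.span ℝ (coneFin V S) = Submodule.span ℝ (S : Set V) := by
  refine le_antisymm (Submodule.span_le.2 (coneFin_subset_span S)) (Submodule.span_mono ?_)
  exact fun v hv => coneFin_self_mem hv

lemma coords_unique {S : Finset V}
    (hS : LinearIndependent ℝ (fun v : (S : Set V) => (v : V))) (a b : V → ℝ)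
    (h : ∑ v ∈ S, a v • v = ∑ v ∈ S, b v • v) : ∀ v ∈ S, a v = b v := by
  classical
  have h0 : ∑ v ∈ S, (a v - b v) • v = 0 := by
    simp only [sub_smul, Finset.sum_sub_distrib, h, sub_self]
  have h1 : ∑ v : (S : Set V), (a v - b v) • (v : V) = 0 := by
    rw [← h0]
    exact Finset.sum_coe_sort S (fun v => (a v - b v) • v)
  intro v hv
  have := linearIndependent_iff'.1 hS Finset.univ (fun v => a v - b v) h1
    ⟨v, by simpa using hv⟩ (Finset.mem_univ _)
  have : a v - b v = 0 := this
  linarith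

/-- A face of a simplicial cone spanned by a subset of generators is extreme. -/
lemma coneFin_face_isExtreme {S S' : Finset V} (hsub : S' ⊆ S)
    (hS : LinearIndependent ℝ (fun v : (S : Set V) => (v : V))) :
    IsExtreme ℝ (coneFin V S) (coneFin V S') := by
  classical
  constructor
  · exact coneFin_mono hsub
  · rintro y hy z hz x hx ⟨p, q, hp, hq, hpq, hsum⟩
    obtain ⟨e, he, rfl⟩ := hy
    obtain ⟨f, hf, rfl⟩ := hz
    obtain ⟨c, hc, hcx⟩ := hx
    -- x = sum over S of c' where c' is c extended by 0
    set c' : V → ℝ := fun v => if v ∈ S' then c v else 0 with hc'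
    have hx' : p • ∑ v ∈ S, e v • v + q • ∑ v ∈ S, f v • v = ∑ v ∈ S, c' v • v := by
      rw [hsum, hcx]
      have := Finset.sum_subset hsub (f := fun v => c' v • v)
        (fun v _ hv => by simp [hc', hv])
      rw [← this]
      exact Finset.sum_congr rfl fun v hv => by simp [hc', hv]
    have hx'' : ∑ v ∈ S, (p * e v + q * f v) • v = ∑ v ∈ S, c' v • v := by
      rw [← hx']
      rw [Finset.smul_sum, Finset.smul_sum, ← Finset.sum_add_distrib]
      exact Finset.sum_congr rfl fun v hv => by rw [add_smul, smul_smul, smul_smul]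
    have key := coords_unique hS _ _ hx''
    have hzero : ∀ v ∈ S, v ∉ S' → e v = 0 ∧ f v = 0 := by
      intro v hv hv'
      have h1 : p * e v + q * f v = 0 := by
        have := key v hv; simpa [hc', hv'] using this
      constructor
      · nlinarith [he v hv, hf v hv, mul_nonneg hp.le (he v hv), mul_nonneg hq.le (hf v hv)]
      · nlinarith [he v hv, hf v hv, mul_nonneg hp.le (he v hv), mul_nonneg hq.le (hf v hv)]
    · refine ⟨e, fun v hv => he v (hsub hv), ?_⟩
      rw [Finset.sum_subset hsub (fun v hv hv' => by rw [(hzero v hv hv').1, zero_smul])]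

/-- Intrinsic description of an extreme convex subcone of a simplicial cone. -/
lemma extreme_eq_coneFin_subset {S : Finset V}
    (hS : LinearIndependent ℝ (fun v : (S : Set V) => (v : V))) {F : Set V}
    (hFsub : F ⊆ coneFin V S) (hext : IsExtreme ℝ (coneFin V S) F)
    (h0 : (0:V) ∈ F) (hsmul : ∀ {a : ℝ} {x : V}, 0 ≤ a → x ∈ F → a • x ∈ F)
    (hadd : ∀ {x y : V}, x ∈ F → y ∈ F → x + y ∈ F) :
    ∃ S' ⊆ S, (∀ v ∈ S', v ∈ F) ∧ F = coneFin V S' := by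
  classical
  refine ⟨S.filter (fun v => v ∈ F), Finset.filter_subset _ _,
    fun v hv => (Finset.mem_filter.1 hv).2, ?_⟩
  apply Set.Subset.antisymm
  · intro x hx
    obtain ⟨c, hc, hcx⟩ := hFsub hx
    have hgen : ∀ v ∈ S, c v ≠ 0 → v ∈ F := by
      intro v hv hcv
      have hcvpos : 0 < c v := lt_of_le_of_ne (hc v hv) (Ne.symm hcv)
      have hrest : x - c v • v ∈ coneFin V S := by
        refine ⟨fun w => if w = v then 0 else c w, ?_, ?_⟩
        · intro w hw; dsimp only; split
          · exact le_refl 0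
          · exact hc w hw
        · have h1 : ∑ w ∈ S, (if w = v then (0:ℝ) else c w) • w
              = ∑ w ∈ S.erase v, c w • w := by
            rw [← Finset.sum_erase S (f := fun w => (if w = v then (0:ℝ) else c w) • w)
              (a := v) (by simp)]
            exact Finset.sum_congr rfl fun w hw => by
              simp [Finset.ne_of_mem_erase hw]
          rw [h1, sub_eq_iff_eq_add, hcx, ← Finset.sum_erase_add S _ hv]
      have hseg : x ∈ openSegment ℝ ((2 * c v) • v) ((2:ℝ) • (x - c v • v)) := by
        refine ⟨1/2, 1/2, by norm_num, by norm_num, by norm_num, ?_⟩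
        rw [smul_smul, smul_smul,
          show (1/2 : ℝ) * (2 * c v) = c v by ring,
          show (1/2 : ℝ) * 2 = 1 by norm_num, one_smul]
        abel
      have := hext.2 (coneFin_smul (by positivity) (coneFin_self_mem hv))
        (coneFin_smul (by norm_num) hrest) hx hseg
      have hv2 : ((2 * c v)⁻¹ * (2 * c v)) • v ∈ F := by
        rw [mul_smul]
        exact hsmul (by positivity) this
      rwa [inv_mul_cancel₀ (by positivity), one_smul] at hv2
    refine ⟨c, fun v hv => hc v (Finset.filter_subset _ _ hv), ?_⟩
    rw [hcx]
    refine (Finset.sum_subset (Finset.filter_subset _ _) ?_).symm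
    intro v hv hv'
    have : c v = 0 := by
      by_contra hne
      exact hv' (Finset.mem_filter.2 ⟨hv, hgen v hv hne⟩)
    rw [this, zero_smul]
  · rintro x ⟨c, hc, rfl⟩
    refine Finset.sum_induction _ (fun y => y ∈ F) (fun a b ha hb => hadd ha hb) h0 ?_
    intro v hv
    exact hsmul (hc v hv) (Finset.mem_filter.1 hv).2

/-- If `x + t • u` lies in a simplicial cone for all small positive `t`, then so does `x`. -/
lemma coneFin_mem_of_forall_small {S : Finset V}
    (hS : LinearIndependent ℝ (fun v : (S : Set V) => (v : V))) {x u : V} {ε : ℝ}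
    (hε : 0 < ε) (h : ∀ t ∈ Set.Ioo (0:ℝ) ε, x + t • u ∈ coneFin V S) :
    x ∈ coneFin V S := by
  classical
  have ht1 : (ε/2) ∈ Set.Ioo (0:ℝ) ε := ⟨by positivity, by linarith⟩
  have ht2 : (ε/3) ∈ Set.Ioo (0:ℝ) ε := ⟨by positivity, by linarith⟩
  obtain ⟨a, ha, hax⟩ := h _ ht1
  obtain ⟨b, hb, hbx⟩ := h _ ht2
  -- coefficients for u and x
  obtain ⟨g, hg⟩ : ∃ g : V → ℝ, g = fun v => (a v - b v) / (ε/2 - ε/3) := ⟨_, rfl⟩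
  obtain ⟨f, hf⟩ : ∃ f : V → ℝ, f = fun v => a v - (ε/2) * g v := ⟨_, rfl⟩
  have hu : u = ∑ v ∈ S, g v • v := by
    have h6 : (ε/2 - ε/3) • u = ∑ v ∈ S, (a v - b v) • v := by
      have : (ε/2 - ε/3) • u = (x + (ε/2) • u) - (x + (ε/3) • u) := by
        rw [sub_smul]; abel
      rw [this, hax, hbx, ← Finset.sum_sub_distrib]
      exact Finset.sum_congr rfl fun v _ => (sub_smul _ _ _).symm
    have hne : (ε/2 - ε/3) ≠ 0 := ne_of_gt (by linarith)
    calc u = (ε/2 - ε/3)⁻¹ • ((ε/2 - ε/3) • u) := by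
            rw [smul_smul, inv_mul_cancel₀ hne, one_smul]
      _ = ∑ v ∈ S, g v • v := by
            rw [h6, Finset.smul_sum]
            exact Finset.sum_congr rfl fun v _ => by
              simp only [hg]; rw [smul_smul]; congr 1
              exact (div_eq_inv_mul _ _).symm
  have hx : x = ∑ v ∈ S, f v • v := by
    have : x = (x + (ε/2) • u) - (ε/2) • u := by abel
    rw [this, hax, hu, Finset.smul_sum, ← Finset.sum_sub_distrib]
    exact Finset.sum_congr rfl fun v _ => by
      simp only [hf]; rw [sub_smul, smul_smul]
  refine ⟨f, fun v hv => ?_, hx⟩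
  by_contra hneg
  push_neg at hneg
  -- pick t small enough that f v + t * g v < 0, contradicting membership
  obtain ⟨t, htdef⟩ : ∃ t : ℝ, t = min (ε/2) (-f v / (2 * (|g v| + 1))) := ⟨_, rfl⟩
  have htpos : 0 < t := by
    rw [htdef]; exact lt_min (by positivity) (div_pos (by linarith) (by positivity))
  have htmem : t ∈ Set.Ioo (0:ℝ) ε := by
    refine ⟨htpos, ?_⟩
    rw [htdef]; exact lt_of_le_of_lt (min_le_left _ _) (by linarith)
  obtain ⟨c, hcpos, hcx⟩ := h t htmem
  have hxt : ∑ v ∈ S, (f v + t * g v) • v = ∑ v ∈ S, c v • v := by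
    rw [← hcx, hx, hu, Finset.smul_sum, ← Finset.sum_add_distrib]
    exact Finset.sum_congr rfl fun w _ => by rw [add_smul, smul_smul]
  have key : f v + t * g v = c v := coords_unique hS _ _ hxt v hv
  have hcv := hcpos v hv
  have htle : t ≤ -f v / (2 * (|g v| + 1)) := by
    rw [htdef]; exact min_le_right _ _
  have h1 : t * g v ≤ t * |g v| := by
    have := le_abs_self (g v); nlinarith
  have h2 : t * |g v| ≤ (-f v / (2 * (|g v| + 1))) * (|g v| + 1) := by
    have h3 : (0:ℝ) ≤ |g v| + 1 := by positivity
    nlinarith [abs_nonneg (g v)]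
  have h4 : (-f v / (2 * (|g v| + 1))) * (|g v| + 1) = -f v / 2 := by
    field_simp
  linarith

/-- A nonempty convex set covered by finitely many subspaces lies in one of them. -/
lemma convex_subset_of_subset_iUnion_submodule :
    ∀ (n : ℕ) (ps : Finset (Submodule ℝ V)) (_ : ps.card ≤ n) (K : Set V)
    (_ : Convex ℝ K) (_ : K.Nonempty) (_ : K ⊆ ⋃ p ∈ ps, (p : Set V)),
    ∃ p ∈ ps, K ⊆ (p : Set V) := by
  intro n
  classical
  induction n with
  | zero =>
    intro ps hcard K _ hne hcov
    rw [Nat.le_zero, Finset.card_eq_zero] at hcard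
    subst hcard
    obtain ⟨x, hx⟩ := hne
    simpa using hcov hx
  | succ n ih =>
    intro ps hcard K hK hne hcov
    by_cases hred : ∃ p ∈ ps, K ⊆ ⋃ q ∈ ps.erase p, (q : Set V)
    · obtain ⟨p, hp, hsub⟩ := hred
      obtain ⟨q, hq, hKq⟩ := ih (ps.erase p)
        (by rw [Finset.card_erase_of_mem hp]; omega) K hK hne hsub
      exact ⟨q, Finset.mem_of_mem_erase hq, hKq⟩
    · push_neg at hred
      -- every p ∈ ps has a point only in p
      have honly : ∀ p ∈ ps, ∃ a ∈ K, a ∈ (p : Set V) ∧ ∀ r ∈ ps, r ≠ p → a ∉ (r : Set V) := by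
        intro p hp
        obtain ⟨a, haK, hnot⟩ := Set.not_subset.1 (hred p hp)
        simp only [Set.mem_iUnion, not_exists] at hnot
        obtain ⟨r, hr, har⟩ := Set.mem_iUnion₂.1 (hcov haK)
        have hrp : r = p := by
          by_contra hne'
          exact hnot r (Finset.mem_erase.2 ⟨hne', hr⟩) har
        subst hrp
        exact ⟨a, haK, har, fun s hs hsr has =>
          hnot s (Finset.mem_erase.2 ⟨hsr, hs⟩) has⟩
      -- ps is nonempty
      have hpsne : ps.Nonempty := by
        obtain ⟨x, hx⟩ := hne
        obtain ⟨r, hr, -⟩ := Set.mem_iUnion₂.1 (hcov hx)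
        exact ⟨r, hr⟩
      obtain ⟨p, hp⟩ := hpsne
      by_cases hsingle : ∀ q ∈ ps, q = p
      · refine ⟨p, hp, fun x hx => ?_⟩
        obtain ⟨r, hr, hxr⟩ := Set.mem_iUnion₂.1 (hcov hx)
        rwa [hsingle r hr] at hxr
      · push_neg at hsingle
        obtain ⟨q, hq, hqp⟩ := hsingle
        obtain ⟨a, haK, hap, haonly⟩ := honly p hp
        obtain ⟨b, hbK, hbq, hbonly⟩ := honly q hq
        have hab : a ≠ b := by
          intro h; subst h
          exact haonly q hq hqp hbq
        -- the open segment (0,1) ∋ t ↦ a + t • (b - a) lies in K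
        have hseg : ∀ t ∈ Set.Ioo (0:ℝ) 1, a + t • (b - a) ∈ K := by
          intro t ⟨ht0, ht1⟩
          have : a + t • (b - a) = (1 - t) • a + t • b := by
            rw [sub_smul, smul_sub, one_smul]; abel
          rw [this]
          exact hK haK hbK (by linarith) ht0.le (by ring)
        haveI : Infinite (Set.Ioo (0:ℝ) 1) := Set.Ioo.infinite (by norm_num)
        haveI : Finite {r // r ∈ ps} := inferInstance
        have hchoice : ∀ t : Set.Ioo (0:ℝ) 1, ∃ r : {r // r ∈ ps},
            a + (t:ℝ) • (b - a) ∈ ((r:Submodule ℝ V) : Set V) := by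
          intro t
          obtain ⟨r, hr, hxr⟩ := Set.mem_iUnion₂.1 (hcov (hseg t t.2))
          exact ⟨⟨r, hr⟩, hxr⟩
        choose gch hgch using hchoice
        obtain ⟨r, hrfib⟩ := Finite.exists_infinite_fiber gch
        haveI := hrfib
        obtain ⟨⟨t1, ht1⟩, ⟨t2, ht2⟩, hne12⟩ := exists_pair_ne (gch ⁻¹' {r})
        have htne : (t1:ℝ) ≠ (t2:ℝ) := by
          intro h
          apply hne12
          apply Subtype.ext; apply Subtype.ext; exact h
        have hmem1 : a + (t1:ℝ) • (b - a) ∈ ((r:Submodule ℝ V) : Set V) := by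
          have := hgch t1; rwa [ht1] at this
        have hmem2 : a + (t2:ℝ) • (b - a) ∈ ((r:Submodule ℝ V) : Set V) := by
          have := hgch t2; rwa [ht2] at this
        -- deduce b - a ∈ r, then a, b ∈ r
        have hdiff : ((t1:ℝ) - t2) • (b - a) ∈ (r : Submodule ℝ V) := by
          have := (r : Submodule ℝ V).sub_mem hmem1 hmem2
          simpa [sub_smul] using this
        have hba : (b - a) ∈ (r : Submodule ℝ V) := by
          have := (r : Submodule ℝ V).smul_mem ((t1:ℝ) - t2)⁻¹ hdiff
          rwa [smul_smul, inv_mul_cancel₀ (sub_ne_zero.2 htne), one_smul] at this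
        have har : a ∈ (r : Submodule ℝ V) := by
          have := (r : Submodule ℝ V).sub_mem hmem1 ((r : Submodule ℝ V).smul_mem t1 hba)
          simpa using this
        have hbr : b ∈ (r : Submodule ℝ V) := by
          have := (r : Submodule ℝ V).add_mem har hba
          simpa using this
        have hrp : (r : Submodule ℝ V) = p := by
          by_contra hne'
          exact haonly r r.2 hne' har
        exact absurd hbr (by rw [hrp]; exact hbonly p hp (Ne.symm hqp))


end Helpers

/-- Let `V` be an `n`-dimensional real vector space, `C ⊆ V` a
full-dimensional pointed polyhedral cone, and `𝒯` a triangulation of `C` by simplicial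
cones of dimension `n`. Let `W ⊆ V` be a linear subspace such that `C ∩ W` is an
extreme subset (face) of `C`, and let `d = dim span(C ∩ W)`. Then
`𝒯_W = {T ∩ W : T ∈ 𝒯, dim span(T ∩ W) = d}` is a triangulation of `C ∩ W` by
simplicial cones of dimension `d`, each contained in `W`. -/
theorem triangulation_of_face {V : Type*} [AddCommGroup V] [Module ℝ V]
    [FiniteDimensional ℝ V]
    (S₀ : Finset V) (hspan : Submodule.span ℝ (S₀ : Set V) = ⊤)
    (C : Set V) (hC : C = coneFin V S₀)
    (hpointed : C ∩ (-C) = {0})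
    (𝒯 : Set (Set V)) (h𝒯 : IsTriangulation V (Module.finrank ℝ V) C 𝒯)
    (W : Submodule ℝ V) (hface : IsExtreme ℝ C (C ∩ (W : Set V)))
    (d : ℕ) (hd : d = Module.finrank ℝ (Submodule.span ℝ (C ∩ (W : Set V)))) :
    IsTriangulation V d (C ∩ (W : Set V))
      {T' : Set V | ∃ T ∈ 𝒯,
        Module.finrank ℝ (Submodule.span ℝ (T ∩ (W : Set V))) = d ∧
        T' = T ∩ (W : Set V)} ∧
    ∀ T' ∈ {T' : Set V | ∃ T ∈ 𝒯,
        Module.finrank ℝ (Submodule.span ℝ (T ∩ (W : Set V))) = d ∧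
        T' = T ∩ (W : Set V)}, T' ⊆ (W : Set V) := by
  classical
  obtain ⟨hfin, hsimp, hunion, hfaces⟩ := h𝒯
  choose Sf hprop using hsimp
  -- every member of 𝒯 is contained in C
  have hTC : ∀ T ∈ 𝒯, T ⊆ C := by
    intro T hT
    rw [← hunion]
    exact Set.subset_biUnion_of_mem (u := fun T => T) hT
  -- T ∩ W is an extreme subset of T
  have hTWext : ∀ T ∈ 𝒯, IsExtreme ℝ T (T ∩ (W : Set V)) := by
    intro T hT
    refine ⟨Set.inter_subset_left, ?_⟩
    intro y hy z hz x hx hseg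
    have hxCW : x ∈ C ∩ (W : Set V) := ⟨hTC T hT hx.1, hx.2⟩
    have := hface.2 (hTC T hT hy) (hTC T hT hz) hxCW hseg
    exact ⟨hy, this.2⟩
  -- canonical generating sets for the slices T ∩ W
  have hslice : ∀ T (hT : T ∈ 𝒯), ∃ S' ⊆ Sf T hT, (∀ v ∈ S', v ∈ (W : Set V)) ∧
      T ∩ (W : Set V) = coneFin V S' := by
    intro T hT
    obtain ⟨hli, hcard, hcone⟩ := hprop T hT
    have h1 : T ∩ (W : Set V) ⊆ coneFin V (Sf T hT) := by
      rw [← hcone]; exact Set.inter_subset_left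
    have h2 : IsExtreme ℝ (coneFin V (Sf T hT)) (T ∩ (W : Set V)) := by
      rw [← hcone]; exact hTWext T hT
    have h0 : (0:V) ∈ T ∩ (W : Set V) :=
      ⟨by rw [hcone]; exact coneFin_zero_mem _, W.zero_mem⟩
    obtain ⟨S', hsub, hmem, heq⟩ := extreme_eq_coneFin_subset hli h1 h2 h0
      (fun {a x} ha hx => ⟨by rw [hcone] at hx ⊢; exact coneFin_smul ha hx.1,
        W.smul_mem a hx.2⟩)
      (fun {x y} hx hy => ⟨by rw [hcone] at hx hy ⊢; exact coneFin_add hx.1 hy.1,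
        W.add_mem hx.2 hy.2⟩)
    exact ⟨S', hsub, fun v hv => (hmem v hv).2, heq⟩
  choose Sw hSwsub hSwW hSweq using hslice
  -- the slices have linearly independent generators and the right dimension count
  have hSwli : ∀ T (hT : T ∈ 𝒯),
      LinearIndependent ℝ (fun v : ((Sw T hT : Finset V) : Set V) => (v : V)) := by
    intro T hT
    exact LinearIndepOn.mono (v := id) (hprop T hT).1 (by exact_mod_cast hSwsub T hT)
  have hdim : ∀ T (hT : T ∈ 𝒯),
      Module.finrank ℝ (Submodule.span ℝ (T ∩ (W : Set V))) = (Sw T hT).card := by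
    intro T hT
    rw [hSweq T hT, span_coneFin]
    exact finrank_span_finset_eq_card (hSwli T hT)
  -- span of slices is below E := span (C ∩ W)
  have hEle : ∀ T ∈ 𝒯, Submodule.span ℝ (T ∩ (W : Set V))
      ≤ Submodule.span ℝ (C ∩ (W : Set V)) := by
    intro T hT
    exact Submodule.span_mono (Set.inter_subset_inter_left _ (hTC T hT))
  have hCWconvex : Convex ℝ (C ∩ (W : Set V)) := by
    rw [hC]
    exact (coneFin_convex S₀).inter W.convex
  have h0CW : (0:V) ∈ C ∩ (W : Set V) := ⟨by rw [hC]; exact coneFin_zero_mem _, W.zero_mem⟩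
  constructor
  · refine ⟨?_, ?_, ?_, ?_⟩
    -- finiteness
    · apply Set.Finite.subset (hfin.image (fun T => T ∩ (W : Set V)))
      rintro Tn ⟨T, hT, -, rfl⟩
      exact ⟨T, hT, rfl⟩
    -- simplicial cones of dimension d
    · rintro Tn ⟨T, hT, hdT, rfl⟩
      exact ⟨Sw T hT, hSwli T hT, by rw [← hdim T hT, hdT], hSweq T hT⟩
    -- union
    · apply Set.Subset.antisymm
      · refine Set.iUnion₂_subset ?_
        rintro Tn ⟨T, hT, -, rfl⟩
        exact Set.inter_subset_inter_left _ (hTC T hT)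
      · intro x hx
        -- choose y ∈ C ∩ W avoiding the spans of all low-dimensional slices
        set smallPs : Finset (Submodule ℝ V) :=
          (hfin.toFinset.filter (fun T =>
            Module.finrank ℝ (Submodule.span ℝ (T ∩ (W : Set V))) ≠ d)).image
            (fun T => Submodule.span ℝ (T ∩ (W : Set V))) with hsmallPs
        have hy : ∃ y ∈ C ∩ (W : Set V), ∀ p ∈ smallPs, y ∉ (p : Set V) := by
          by_contra hcon
          push_neg at hcon
          have hcov : C ∩ (W : Set V) ⊆ ⋃ p ∈ smallPs, (p : Set V) := by
            intro z hz
            obtain ⟨p, hp, hzp⟩ := hcon z hz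
            exact Set.mem_biUnion hp hzp
          obtain ⟨p, hp, hKp⟩ := convex_subset_of_subset_iUnion_submodule
            smallPs.card smallPs le_rfl _ hCWconvex ⟨0, h0CW⟩ hcov
          rw [hsmallPs] at hp
          obtain ⟨T, hTmem, rfl⟩ := Finset.mem_image.1 hp
          rw [Finset.mem_filter, Set.Finite.mem_toFinset] at hTmem
          obtain ⟨hT, hne⟩ := hTmem
          have hle1 : Submodule.span ℝ (C ∩ (W : Set V))
              ≤ Submodule.span ℝ (T ∩ (W : Set V)) := Submodule.span_le.2 hKp
          have : d ≤ Module.finrank ℝ (Submodule.span ℝ (T ∩ (W : Set V))) := by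
            rw [hd]; exact Submodule.finrank_mono hle1
          have : Module.finrank ℝ (Submodule.span ℝ (T ∩ (W : Set V))) ≤ d := by
            rw [hd]; exact Submodule.finrank_mono (hEle T hT)
          omega
        obtain ⟨y, hyCW, hyavoid⟩ := hy
        obtain ⟨u, hu⟩ : ∃ u : V, u = y - x := ⟨_, rfl⟩
        -- the set of bad parameters is finite
        have hbadfin : {t : ℝ | ∃ T ∈ 𝒯,
            Module.finrank ℝ (Submodule.span ℝ (T ∩ (W : Set V))) ≠ d ∧
            x + t • u ∈ Submodule.span ℝ (T ∩ (W : Set V))}.Finite := by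
          have : {t : ℝ | ∃ T ∈ 𝒯,
              Module.finrank ℝ (Submodule.span ℝ (T ∩ (W : Set V))) ≠ d ∧
              x + t • u ∈ Submodule.span ℝ (T ∩ (W : Set V))}
              ⊆ ⋃ T ∈ hfin.toFinset, {t : ℝ |
                Module.finrank ℝ (Submodule.span ℝ (T ∩ (W : Set V))) ≠ d ∧
                x + t • u ∈ Submodule.span ℝ (T ∩ (W : Set V))} := by
            rintro t ⟨T, hT, hne, hmem⟩
            exact Set.mem_biUnion (hfin.mem_toFinset.2 hT) ⟨hne, hmem⟩
          refine Set.Finite.subset (Set.Finite.biUnion (hfin.toFinset.finite_toSet) ?_) this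
          intro T hT'
          have hT : T ∈ 𝒯 := hfin.mem_toFinset.1 hT'
          rcases Classical.em
            (Module.finrank ℝ (Submodule.span ℝ (T ∩ (W : Set V))) = d) with hcase | hcase
          · convert Set.finite_empty using 1
            ext t; simp [hcase]
          -- at most one bad parameter for each low-dimensional slice
          apply Set.Subsingleton.finite
          rintro t1 ⟨-, h1⟩ t2 ⟨-, h2⟩
          by_contra hne12
          have hyP : y ∉ Submodule.span ℝ (T ∩ (W : Set V)) := by
            apply hyavoid
            rw [hsmallPs]
            exact Finset.mem_image.2 ⟨T, Finset.mem_filter.2 ⟨hT', hcase⟩, rfl⟩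
          have hdiff : ((t1:ℝ) - t2) • u ∈ Submodule.span ℝ (T ∩ (W : Set V)) := by
            have := Submodule.sub_mem _ h1 h2
            simpa [sub_smul] using this
          have huP : u ∈ Submodule.span ℝ (T ∩ (W : Set V)) := by
            have := Submodule.smul_mem _ ((t1:ℝ) - t2)⁻¹ hdiff
            rwa [smul_smul, inv_mul_cancel₀ (sub_ne_zero.2 hne12), one_smul] at this
          have hxP : x ∈ Submodule.span ℝ (T ∩ (W : Set V)) := by
            have := Submodule.sub_mem _ h1 (Submodule.smul_mem _ t1 huP)
            simpa using this
          exact hyP (by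
            have : x + u ∈ Submodule.span ℝ (T ∩ (W : Set V)) := Submodule.add_mem _ hxP huP
            rwa [hu, add_sub_cancel] at this)
        -- for every n, pick a good parameter below 1/(n+1)
        have hpick : ∀ n : ℕ, ∃ t : ℝ, (0 < t ∧ t < 1/((n:ℝ)+1) ∧ t < 1) ∧
            ∃ T, ∃ hT : T ∈ 𝒯,
              Module.finrank ℝ (Submodule.span ℝ (T ∩ (W : Set V))) = d ∧
              x + t • u ∈ T ∩ (W : Set V) := by
          intro n
          have hδ : (0:ℝ) < min 1 (1/((n:ℝ)+1)) := lt_min one_pos (by positivity)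
          have hIoo : (Set.Ioo (0:ℝ) (min 1 (1/((n:ℝ)+1)))).Infinite :=
            Set.infinite_coe_iff.mp (Set.Ioo.infinite hδ)
          obtain ⟨t, ht⟩ := (hIoo.diff hbadfin).nonempty
          obtain ⟨⟨ht0, htlt⟩, htgood⟩ := ht
          have ht1 : t < 1 := lt_of_lt_of_le htlt (min_le_left _ _)
          have htn : t < 1/((n:ℝ)+1) := lt_of_lt_of_le htlt (min_le_right _ _)
          have hxt : x + t • u ∈ C ∩ (W : Set V) := by
            have : x + t • u = (1 - t) • x + t • y := by
              rw [hu, smul_sub, sub_smul, one_smul]; abel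
            rw [this]
            exact hCWconvex hx hyCW (by linarith) ht0.le (by ring)
          obtain ⟨T, hT, hxtT⟩ : ∃ T ∈ 𝒯, x + t • u ∈ T := by
            have : x + t • u ∈ ⋃ T ∈ 𝒯, T := by rw [hunion]; exact hxt.1
            simpa using this
          refine ⟨t, ⟨ht0, htn, ht1⟩, T, hT, ?_, hxtT, hxt.2⟩
          by_contra hne
          exact htgood ⟨T, hT, hne, Submodule.subset_span ⟨hxtT, hxt.2⟩⟩
        choose tseq htseq Tseq hTseqmem hTseqfull hTseqmem2 using hpick
        -- pigeonhole: one full-dimensional slice contains x + tseq n • u infinitely often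
        haveI : Finite ↥𝒯 := hfin.to_subtype
        obtain ⟨g, hg⟩ : ∃ g : ℕ → ↥𝒯, g = fun n : ℕ => (⟨Tseq n, hTseqmem n⟩ : ↥𝒯) :=
          ⟨_, rfl⟩
        obtain ⟨T0, hT0fib⟩ := Finite.exists_infinite_fiber g
        have hfib' : {n : ℕ | g n = T0}.Infinite := Set.infinite_coe_iff.mp hT0fib
        have hfib : {n : ℕ | Tseq n = (T0 : Set V)}.Infinite := by
          refine Set.Infinite.mono ?_ hfib'
          intro n hn
          have : g n = T0 := hn
          rw [hg] at this
          exact congrArg Subtype.val this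
        obtain ⟨n0, hn0⟩ := hfib.nonempty
        -- T0 ∩ W contains x + s • u for all s ∈ (0, tseq n0)
        have hT0full : Module.finrank ℝ
            (Submodule.span ℝ ((T0 : Set V) ∩ (W : Set V))) = d := by
          rw [← hn0]; exact hTseqfull n0
        have hT0conv : Convex ℝ ((T0 : Set V) ∩ (W : Set V)) := by
          rw [hSweq (T0 : Set V) T0.2]
          exact coneFin_convex _
        have hsmall : ∀ s ∈ Set.Ioo (0:ℝ) (tseq n0),
            x + s • u ∈ (T0 : Set V) ∩ (W : Set V) := by
          rintro s ⟨hs0, hs1⟩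
          obtain ⟨m, hmfib, hmgt⟩ := hfib.exists_gt ⌈1/s⌉₊
          have hm1 : 1/s < (m:ℝ) := by
            calc 1/s ≤ (⌈1/s⌉₊ : ℝ) := Nat.le_ceil _
            _ < m := by exact_mod_cast hmgt
          have hsm : tseq m < s := by
            have h1 : tseq m < 1/((m:ℝ)+1) := (htseq m).2.1
            have h2 : (1:ℝ)/((m:ℝ)+1) < s := by
              rw [div_lt_iff₀ (by positivity)]
              rw [div_lt_iff₀ hs0] at hm1
              nlinarith
            linarith
          have hmm : x + tseq m • u ∈ (T0 : Set V) ∩ (W : Set V) := by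
            have := hTseqmem2 m
            have hm' : Tseq m = (T0 : Set V) := hmfib
            rwa [hm'] at this
          have hnn : x + tseq n0 • u ∈ (T0 : Set V) ∩ (W : Set V) := by
            have := hTseqmem2 n0
            rwa [hn0] at this
          -- s is a convex combination of tseq m and tseq n0
          have hlt : tseq m < tseq n0 := lt_trans hsm hs1
          have hden : tseq n0 - tseq m ≠ 0 := ne_of_gt (by linarith)
          have ha : (0:ℝ) ≤ (tseq n0 - s) / (tseq n0 - tseq m) := by
            apply div_nonneg <;> linarith
          have hb : (0:ℝ) ≤ (s - tseq m) / (tseq n0 - tseq m) := by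
            apply div_nonneg <;> linarith
          have hab : (tseq n0 - s) / (tseq n0 - tseq m)
              + (s - tseq m) / (tseq n0 - tseq m) = 1 := by
            field_simp
            ring
          have hcomb : ((tseq n0 - s) / (tseq n0 - tseq m)) • (x + tseq m • u)
              + ((s - tseq m) / (tseq n0 - tseq m)) • (x + tseq n0 • u)
              = x + s • u := by
            rw [smul_add, smul_add, smul_smul, smul_smul]
            have hs' : (tseq n0 - s) / (tseq n0 - tseq m) * tseq m
                + (s - tseq m) / (tseq n0 - tseq m) * tseq n0 = s := by
              field_simp; ring
            calc ((tseq n0 - s) / (tseq n0 - tseq m)) • x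
                  + ((tseq n0 - s) / (tseq n0 - tseq m) * tseq m) • u
                  + (((s - tseq m) / (tseq n0 - tseq m)) • x
                  + ((s - tseq m) / (tseq n0 - tseq m) * tseq n0) • u)
                = (((tseq n0 - s) / (tseq n0 - tseq m))
                    + ((s - tseq m) / (tseq n0 - tseq m))) • x
                  + (((tseq n0 - s) / (tseq n0 - tseq m) * tseq m)
                    + ((s - tseq m) / (tseq n0 - tseq m) * tseq n0)) • u := by
                  rw [add_smul, add_smul]; abel
              _ = x + s • u := by rw [hab, hs', one_smul]
          rw [← hcomb]
          exact hT0conv hmm hnn ha hb hab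
        -- conclude x ∈ T0 ∩ W
        have hxT0 : x ∈ (T0 : Set V) ∩ (W : Set V) := by
          rw [hSweq (T0 : Set V) T0.2] at hsmall ⊢
          exact coneFin_mem_of_forall_small (hSwli (T0 : Set V) T0.2)
            (htseq n0).1 hsmall
        exact Set.mem_biUnion (Set.mem_setOf_eq ▸ ⟨(T0 : Set V), T0.2, hT0full, rfl⟩) hxT0
    -- pairwise common faces
    · rintro Tn hTn Tn' hTn' ST ⟨liST, cardST, hSTeq⟩ ST' ⟨liST', cardST', hST'eq⟩
      obtain ⟨T, hT, hdT, rfl⟩ := hTn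
      obtain ⟨T2, hT2, hdT2, rfl⟩ := hTn'
      obtain ⟨S₁, hS₁sub, S₂, hS₂sub, hS₁eq, hS₂eq⟩ :=
        hfaces T hT T2 hT2 (Sf T hT) (hprop T hT) (Sf T2 hT2) (hprop T2 hT2)
      set F : Set V := (T ∩ (W : Set V)) ∩ (T2 ∩ (W : Set V)) with hF
      have hF2 : F = coneFin V ST ∩ coneFin V ST' := by rw [hF, hSTeq, hST'eq]
      have h0F : (0:V) ∈ F := by
        rw [hF2]; exact ⟨coneFin_zero_mem _, coneFin_zero_mem _⟩
      have hsmulF : ∀ {a : ℝ} {z : V}, 0 ≤ a → z ∈ F → a • z ∈ F := by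
        intro a z ha hz
        rw [hF2] at hz ⊢
        exact ⟨coneFin_smul ha hz.1, coneFin_smul ha hz.2⟩
      have haddF : ∀ {z w : V}, z ∈ F → w ∈ F → z + w ∈ F := by
        intro z w hz hw
        rw [hF2] at hz hw ⊢
        exact ⟨coneFin_add hz.1 hw.1, coneFin_add hz.2 hw.2⟩
      -- extremeness of F in T ∩ W and in T2 ∩ W
      have hTT2ext : IsExtreme ℝ T (T ∩ T2) := by
        rw [← hS₁eq, (hprop T hT).2.2]
        exact coneFin_face_isExtreme hS₁sub (hprop T hT).1
      have hT2Text : IsExtreme ℝ T2 (T ∩ T2) := by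
        rw [← hS₂eq, (hprop T2 hT2).2.2]
        exact coneFin_face_isExtreme hS₂sub (hprop T2 hT2).1
      have hext1 : IsExtreme ℝ (coneFin V ST) F := by
        rw [← hSTeq]
        refine ⟨Set.inter_subset_left, ?_⟩
        intro y hy z hz w hw hseg
        have hwTT2 : w ∈ T ∩ T2 := ⟨hw.1.1, hw.2.1⟩
        have := hTT2ext.2 hy.1 hz.1 hwTT2 hseg
        exact ⟨hy, this.2, hy.2⟩
      have hext2 : IsExtreme ℝ (coneFin V ST') F := by
        rw [← hST'eq]
        refine ⟨Set.inter_subset_right, ?_⟩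
        intro y hy z hz w hw hseg
        have hwTT2 : w ∈ T ∩ T2 := ⟨hw.1.1, hw.2.1⟩
        have := hT2Text.2 hy.1 hz.1 hwTT2 hseg
        exact ⟨⟨this.1, hy.2⟩, hy⟩
      obtain ⟨S, hSsub, -, hSeq⟩ := extreme_eq_coneFin_subset liST
        (hSTeq ▸ (Set.inter_subset_left : F ⊆ T ∩ (W : Set V))) hext1 h0F
        (fun {a z} ha hz => hsmulF ha hz) (fun {z w} hz hw => haddF hz hw)
      obtain ⟨S', hS'sub, -, hS'eq⟩ := extreme_eq_coneFin_subset liST'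
        (hST'eq ▸ (Set.inter_subset_right : F ⊆ T2 ∩ (W : Set V))) hext2 h0F
        (fun {a z} ha hz => hsmulF ha hz) (fun {z w} hz hw => haddF hz hw)
      exact ⟨S, hSsub, S', hS'sub, hSeq.symm, hS'eq.symm⟩
  · rintro Tn ⟨T, hT, -, rfl⟩
    exact Set.inter_subset_right
end
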